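/- arXiv:1510.08211 — 9 statements merged into one kernel-verified Lean document; each statement's English description precedes it below -/
import Mathlib

section
/- Let R be a finite (not necessarily unital, not necessarily commutative) ring and S a subring of R. Then Pr(R) ≤ Pr(S, R) ≤ Pr(S). -/
open scoped Pointwise

/-- The probability that a randomly chosen pair, one element from `S` and one from `T`,
commutes (multiplicatively). For a subring `S` of a finite ring `R` this gives
`Pr(S, R) = relCommProb R S Set.univ`, `Pr(R) = relCommProb R Set.univ Set.univ`, etc. -/
noncomputable def relCommProb (R : Type*) [NonUnitalRing R] (S T : Set R) : ℚ :=
  (Nat.card {p : S × T // (p.1 : R) * (p.2 : R) = (p.2 : R) * (p.1 : R)} : ℚ) /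
    ((Nat.card S : ℚ) * (Nat.card T : ℚ))

/-- `C_S(r)`: the centralizer of `r` in the subring `S`, as an additive subgroup of `R`.
Taking `S = ⊤` gives `C_R(r)`. -/
def centIn {R : Type*} [NonUnitalRing R] (S : NonUnitalSubring R) (r : R) : AddSubgroup R where
  carrier := {x | x ∈ S ∧ x * r = r * x}
  zero_mem' := ⟨S.zero_mem, by rw [zero_mul, mul_zero]⟩
  add_mem' := by
    rintro a b ⟨ha, ha'⟩ ⟨hb, hb'⟩
    exact ⟨S.add_mem ha hb, by rw [add_mul, mul_add, ha', hb']⟩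
  neg_mem' := by
    rintro a ⟨ha, ha'⟩
    exact ⟨S.neg_mem ha, by rw [neg_mul, mul_neg, ha']⟩

/-- `Z(S, R)`: the elements of the subring `S` commuting with every element of `R`,
as an additive subgroup of `R`.  Taking `S = ⊤` gives the center `Z(R)`. -/
def zCenter {R : Type*} [NonUnitalRing R] (S : NonUnitalSubring R) : AddSubgroup R where
  carrier := {x | x ∈ S ∧ ∀ r : R, x * r = r * x}
  zero_mem' := ⟨S.zero_mem, fun r => by rw [zero_mul, mul_zero]⟩
  add_mem' := by
    rintro a b ⟨ha, ha'⟩ ⟨hb, hb'⟩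
    exact ⟨S.add_mem ha hb, fun r => by rw [add_mul, mul_add, ha' r, hb' r]⟩
  neg_mem' := by
    rintro a ⟨ha, ha'⟩
    exact ⟨S.neg_mem ha, fun r => by rw [neg_mul, mul_neg, ha' r]⟩

/-- `K(S, R)`: the set of additive commutators `s*r - r*s` with `s ∈ S`, `r ∈ R`. -/
def kSet {R : Type*} [NonUnitalRing R] (S : NonUnitalSubring R) : Set R :=
  {x | ∃ s ∈ S, ∃ r : R, x = s * r - r * s}

/-- `[S, R]`: the additive subgroup of `(R, +)` generated by `K(S, R)`. -/
def commSub {R : Type*} [NonUnitalRing R] (S : NonUnitalSubring R) : AddSubgroup R :=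
  AddSubgroup.closure (kSet S)

/-- `[x, R]`: the additive subgroup of all commutators `x*y - y*x`, `y ∈ R`. -/
def elemComm {R : Type*} [NonUnitalRing R] (x : R) : AddSubgroup R where
  carrier := {z | ∃ y : R, z = x * y - y * x}
  zero_mem' := ⟨0, by simp⟩
  add_mem' := by
    rintro a b ⟨y, rfl⟩ ⟨z, rfl⟩
    exact ⟨y + z, by rw [mul_add, add_mul]; abel⟩
  neg_mem' := by
    rintro a ⟨y, rfl⟩
    exact ⟨-y, by rw [mul_neg, neg_mul]; abel⟩

/-! Counting commuting pairs by their first coordinate, `Pr(A, S)` is the average over `a ∈ A`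
of `|C_S(a)| / |S|`. Since `C_S(a) = C_R(a) ∩ S`, and any two subgroups `H`, `K` of a finite group
`G` satisfy `|H| |K| ≤ |H ∩ K| |G|` (as `|HK| = |H| |K| / |H ∩ K|`), we get
`|C_R(a)| / |R| ≤ |C_S(a)| / |S|`, hence `Pr(A, R) ≤ Pr(A, S)` for every `A`. Take `A = S`, and
`A = R` together with `Pr(R, S) = Pr(S, R)`. -/

@[to_additive card_mul_card_le_card_inf_mul_card]
theorem Subgroup.card_mul_card_le_card_inf_mul_card {G : Type*} [Group G] [Finite G]
    (H K : Subgroup G) : Nat.card H * Nat.card K ≤ Nat.card ↥(H ⊓ K) * Nat.card G := by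
  have hH : Nat.card H = Nat.card ↥(H ⊓ K) * K.relIndex H := by
    rw [← inf_relIndex_left, ← relIndex_bot_left, ← relIndex_bot_left,
      relIndex_mul_relIndex _ _ _ bot_le inf_le_left]
  have hK : K.relIndex H ≤ K.index := by
    rw [← relIndex_top_right]
    exact relIndex_le_of_le_right le_top (by simpa using K.index_ne_zero_of_finite)
  calc Nat.card H * Nat.card K
      = Nat.card ↥(H ⊓ K) * (K.relIndex H * Nat.card K) := by rw [hH, mul_assoc]
    _ ≤ Nat.card ↥(H ⊓ K) * (K.index * Nat.card K) := by gcongr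
    _ = Nat.card ↥(H ⊓ K) * Nat.card G := by rw [K.index_mul_card]

section NonUnitalRing

variable {R : Type*} [NonUnitalRing R]

theorem relCommProb_comm (A B : Set R) : relCommProb R A B = relCommProb R B A := by
  have hpairs : Nat.card {p : A × B // (p.1 : R) * p.2 = p.2 * p.1} =
      Nat.card {p : B × A // (p.1 : R) * p.2 = p.2 * p.1} :=
    Nat.card_congr <| (Equiv.prodComm A B).subtypeEquiv fun _ => eq_comm
  rw [relCommProb, relCommProb, hpairs, mul_comm]

theorem centIn_eq_inf (S : NonUnitalSubring R) (r : R) :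
    centIn S r = centIn ⊤ r ⊓ S.toAddSubgroup := by
  ext x
  simp [centIn, and_comm]

theorem natCard_commute_eq_card_centIn (S : NonUnitalSubring R) (a : R) :
    Nat.card {b : (S : Set R) // a * b = b * a} = Nat.card (centIn S a) :=
  Nat.card_congr <| (Equiv.subtypeSubtypeEquivSubtypeInter (· ∈ S) (fun b => a * b = b * a)).trans
    (Equiv.subtypeEquivRight (q := (· ∈ centIn S a)) fun _ => and_congr_right' eq_comm)

variable [Finite R]

theorem natCard_commPairs_eq_sum_card_centIn (A : Set R) [Fintype A] (S : NonUnitalSubring R) :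
    Nat.card {p : A × (S : Set R) // (p.1 : R) * p.2 = p.2 * p.1} =
      ∑ a : A, Nat.card (centIn S a) := by
  rw [Nat.card_congr (Equiv.subtypeProdEquivSigmaSubtype fun (a : A) (b : (S : Set R)) =>
    (a : R) * b = b * a), Nat.card_sigma]
  exact Finset.sum_congr rfl fun a _ => natCard_commute_eq_card_centIn S a

theorem relCommProb_eq_sum_card_centIn (A : Set R) [Fintype A] (S : NonUnitalSubring R) :
    relCommProb R A S = (∑ a : A, (Nat.card (centIn S a) : ℚ) / Nat.card S) / Nat.card A := by
  rw [relCommProb, natCard_commPairs_eq_sum_card_centIn, ← Finset.sum_div, div_div, mul_comm]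
  push_cast
  rfl

theorem card_centIn_top_div_card_le (S : NonUnitalSubring R) (r : R) :
    (Nat.card (centIn ⊤ r) : ℚ) / Nat.card (⊤ : NonUnitalSubring R) ≤
      Nat.card (centIn S r) / Nat.card S := by
  have key := AddSubgroup.card_mul_card_le_card_inf_mul_card (centIn ⊤ r) S.toAddSubgroup
  rw [← centIn_eq_inf] at key
  have hS : (0 : ℚ) < Nat.card S := by exact_mod_cast Nat.card_pos
  have hR : (0 : ℚ) < Nat.card (⊤ : NonUnitalSubring R) := by exact_mod_cast Nat.card_pos
  rw [div_le_div_iff₀ hR hS, Nat.card_congr NonUnitalSubring.topEquiv.toEquiv]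
  exact_mod_cast key

theorem relCommProb_univ_le (A : Set R) (S : NonUnitalSubring R) :
    relCommProb R A Set.univ ≤ relCommProb R A S := by
  have := Fintype.ofFinite A
  rw [← NonUnitalSubring.coe_top, relCommProb_eq_sum_card_centIn,
    relCommProb_eq_sum_card_centIn]
  exact div_le_div_of_nonneg_right
    (Finset.sum_le_sum fun a _ => card_centIn_top_div_card_le S a) (Nat.cast_nonneg _)

end NonUnitalRing

/-- For a subring `S` of a finite ring `R`: `Pr(R) ≤ Pr(S, R) ≤ Pr(S)`. -/
theorem commProb_le_relCommProb_le_commProb {R : Type*} [NonUnitalRing R] [Fintype R]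
    (S : NonUnitalSubring R) :
    relCommProb R Set.univ Set.univ ≤ relCommProb R (S : Set R) Set.univ ∧
    relCommProb R (S : Set R) Set.univ ≤ relCommProb R (S : Set R) (S : Set R) := by
  refine ⟨?_, relCommProb_univ_le (S : Set R) S⟩
  rw [relCommProb_comm (S : Set R)]
  exact relCommProb_univ_le Set.univ S
end

section
/- Let R be a finite (not necessarily unital, not necessarily commutative) ring with |R| > 1, let p be the smallest prime dividing |R|, and let S be a subring of R. Then |Z(S,R)|/|S| + p(|S| − |Z(S,R)|)/(|S|·|R|) ≤ Pr(S, R) ≤ ((p − 1)|Z(S,R)| + |S|)/(p·|S|). -/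
/-!
Counting commuting pairs fibrewise, `Pr(S, R) · |S| · |R| = ∑_{s ∈ S} |C_R(s)|`. An element of
`Z(S, R)` contributes `|R|`. For any other `s ∈ S`, `C_R(s)` is an additive subgroup of `R` that is
proper and contains `s ≠ 0`, so its order and its index are divisors of `|R|` different from `1`,
hence both are at least `p`: `p ≤ |C_R(s)| ≤ |R| / p`. Summing these bounds gives both inequalities.
-/

open scoped Pointwise

lemma le_of_ne_one_of_dvd_of_forall_prime_dvd_le {n m p : ℕ}
    (hmin : ∀ q : ℕ, q.Prime → q ∣ n → p ≤ q) (hn : n ≠ 0) (hm : m ≠ 1) (hmn : m ∣ n) :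
    p ≤ m :=
  (hmin _ (Nat.minFac_prime hm) ((Nat.minFac_dvd m).trans hmn)).trans
    (Nat.minFac_le (Nat.pos_of_dvd_of_pos hmn (Nat.pos_of_ne_zero hn)))

namespace AddSubgroup

variable {G : Type*} [AddGroup G] [Finite G] {p : ℕ} {H : AddSubgroup G}

lemma le_card_of_ne_bot (hmin : ∀ q : ℕ, q.Prime → q ∣ Nat.card G → p ≤ q) (hH : H ≠ ⊥) :
    p ≤ Nat.card H :=
  le_of_ne_one_of_dvd_of_forall_prime_dvd_le hmin Nat.card_pos.ne'
    ((one_lt_card_iff_ne_bot H).2 hH).ne' (card_addSubgroup_dvd_card H)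

lemma mul_card_le_of_ne_top (hmin : ∀ q : ℕ, q.Prime → q ∣ Nat.card G → p ≤ q) (hH : H ≠ ⊤) :
    p * Nat.card H ≤ Nat.card G := by
  rw [← H.index_mul_card]
  exact Nat.mul_le_mul_right _ <| le_of_ne_one_of_dvd_of_forall_prime_dvd_le hmin
    Nat.card_pos.ne' (mt index_eq_one.1 hH) H.index_dvd_card

end AddSubgroup

section

variable {R : Type*} [NonUnitalRing R]

lemma mem_centIn_top {s x : R} : x ∈ centIn ⊤ s ↔ x * s = s * x :=
  ⟨And.right, And.intro (NonUnitalSubring.mem_top x)⟩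

lemma centIn_top_eq_top_of_mem_zCenter {S : NonUnitalSubring R} {s : R} (hs : s ∈ zCenter S) :
    centIn ⊤ s = ⊤ :=
  eq_top_iff.2 fun r _ => mem_centIn_top.2 (hs.2 r).symm

lemma centIn_top_ne_top_of_notMem_zCenter {S : NonUnitalSubring R} {s : R} (hsS : s ∈ S)
    (hs : s ∉ zCenter S) : centIn ⊤ s ≠ ⊤ := by
  intro htop
  refine hs ⟨hsS, fun r => (mem_centIn_top.1 ?_).symm⟩
  exact htop ▸ AddSubgroup.mem_top r

lemma centIn_top_ne_bot_of_notMem_zCenter {S : NonUnitalSubring R} {s : R}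
    (hs : s ∉ zCenter S) : centIn ⊤ s ≠ ⊥ := by
  intro hbot
  have hs0 : s = 0 := AddSubgroup.mem_bot.1 (hbot ▸ mem_centIn_top.2 rfl)
  exact hs (hs0 ▸ (zCenter S).zero_mem)

lemma card_subtype_mem_zCenter (S : NonUnitalSubring R) :
    Nat.card {s : S // (s : R) ∈ zCenter S} = Nat.card (zCenter S) :=
  Nat.card_congr (Equiv.subtypeSubtypeEquivSubtype fun hs => hs.1)

def commutingPairsEquivSigmaCentIn (S : NonUnitalSubring R) :
    {q : ↥(S : Set R) × ↥(Set.univ : Set R) // (q.1 : R) * q.2 = q.2 * q.1} ≃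
      Σ s : S, centIn ⊤ (s : R) where
  toFun q := ⟨q.1.1, q.1.2, mem_centIn_top.2 q.2.symm⟩
  invFun q := ⟨(q.1, ⟨q.2, trivial⟩), (mem_centIn_top.1 q.2.2).symm⟩

lemma relCommProb_univ_eq (S : NonUnitalSubring R) :
    relCommProb R S Set.univ =
      Nat.card (Σ s : S, centIn ⊤ (s : R)) / (Nat.card S * Nat.card R) := by
  rw [relCommProb, Nat.card_congr (commutingPairsEquivSigmaCentIn S), Nat.card_univ]
  rfl

end

namespace Nat

variable {ι : Type*} [Finite ι] {β : ι → Type*} [∀ i, Finite (β i)]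

lemma card_mul_le_card_sigma {m : ℕ} (h : ∀ i, m ≤ Nat.card (β i)) :
    Nat.card ι * m ≤ Nat.card (Σ i, β i) := by
  have := Fintype.ofFinite ι
  rw [Nat.card_sigma, Nat.card_eq_fintype_card, ← smul_eq_mul, ← Finset.card_univ]
  exact Finset.card_nsmul_le_sum _ _ _ fun i _ => h i

lemma mul_card_sigma_le {k m : ℕ} (h : ∀ i, k * Nat.card (β i) ≤ m) :
    k * Nat.card (Σ i, β i) ≤ Nat.card ι * m := by
  have := Fintype.ofFinite ι
  rw [Nat.card_sigma, Finset.mul_sum, Nat.card_eq_fintype_card, ← smul_eq_mul, ← Finset.card_univ]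
  exact Finset.sum_le_card_nsmul _ _ _ fun i _ => h i

end Nat

section

variable {R : Type*} [NonUnitalRing R] [Finite R] (S : NonUnitalSubring R)

lemma card_notMem_zCenter_add_card_zCenter :
    Nat.card {s : S // (s : R) ∉ zCenter S} + Nat.card (zCenter S) = Nat.card S := by
  classical
  rw [← card_subtype_mem_zCenter S, add_comm,
    ← Nat.card_sum, Nat.card_congr (Equiv.sumCompl _)]

lemma card_sigma_centIn_eq :
    Nat.card (Σ s : S, centIn ⊤ (s : R)) = Nat.card (zCenter S) * Nat.card R +
      Nat.card (Σ s : {s : S // (s : R) ∉ zCenter S}, centIn ⊤ (s : R)) := by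
  classical
  have := Fintype.ofFinite S
  rw [Nat.card_sigma, Nat.card_sigma,
    ← Fintype.sum_subtype_add_sum_subtype (fun s : S => (s : R) ∈ zCenter S)]
  congr 1
  rw [Fintype.sum_congr _ (fun _ => Nat.card R) fun s => by
      rw [centIn_top_eq_top_of_mem_zCenter s.2, AddSubgroup.card_top],
    Finset.sum_const, Finset.card_univ, smul_eq_mul, ← Nat.card_eq_fintype_card,
    card_subtype_mem_zCenter S]

end

lemma commProb_bounds_of_count_bounds {z k s n p N : ℕ} (hs : 0 < s) (hn : 0 < n) (hp : 0 < p)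
    (hks : k + z = s) (hlow : z * n + k * p ≤ N) (hup : p * N ≤ p * (z * n) + k * n) :
    (z / s + p * (s - z) / (s * n) : ℚ) ≤ N / (s * n) ∧
      (N / (s * n) : ℚ) ≤ ((p - 1) * z + s) / (p * s) := by
  subst hks
  push_cast
  qify at hs hn hp hlow hup
  constructor
  · calc (z / (k + z) + p * (k + z - z) / ((k + z) * n) : ℚ)
          = (z * n + k * p) / ((k + z) * n) := by field_simp; ring
      _ ≤ N / ((k + z) * n) := by gcongr
  · rw [div_le_div_iff₀ (by positivity) (by positivity)]
    nlinarith [mul_le_mul_of_nonneg_left hup hs.le]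

theorem relCommProb_bounds_general {R : Type*} [NonUnitalRing R] [Fintype R]
    (p : ℕ) (hp : p.Prime)
    (hmin : ∀ q : ℕ, q.Prime → q ∣ Nat.card R → p ≤ q) (S : NonUnitalSubring R) :
    (Nat.card (zCenter S) : ℚ) / (Nat.card S : ℚ) +
        (p : ℚ) * ((Nat.card S : ℚ) - (Nat.card (zCenter S) : ℚ)) /
          ((Nat.card S : ℚ) * (Nat.card R : ℚ)) ≤
      relCommProb R (S : Set R) Set.univ ∧
    relCommProb R (S : Set R) Set.univ ≤
      (((p : ℚ) - 1) * (Nat.card (zCenter S) : ℚ) + (Nat.card S : ℚ)) /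
        ((p : ℚ) * (Nat.card S : ℚ)) := by
  have hlow := Nat.card_mul_le_card_sigma fun s : {s : S // (s : R) ∉ zCenter S} =>
    AddSubgroup.le_card_of_ne_bot hmin (centIn_top_ne_bot_of_notMem_zCenter s.2)
  have hup := Nat.mul_card_sigma_le fun s : {s : S // (s : R) ∉ zCenter S} =>
    AddSubgroup.mul_card_le_of_ne_top hmin (centIn_top_ne_top_of_notMem_zCenter s.1.2 s.2)
  rw [relCommProb_univ_eq]
  refine commProb_bounds_of_count_bounds Nat.card_pos Nat.card_pos hp.pos
    (card_notMem_zCenter_add_card_zCenter S) ?_ ?_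
  · rw [card_sigma_centIn_eq]
    exact Nat.add_le_add_left hlow _
  · rw [card_sigma_centIn_eq, mul_add]
    exact Nat.add_le_add_left hup _

/-- If `p` is the smallest prime dividing `|R|` and `S` is a subring of `R`, then
`|Z(S,R)|/|S| + p(|S| − |Z(S,R)|)/(|S||R|) ≤ Pr(S, R) ≤ ((p−1)|Z(S,R)| + |S|)/(p|S|)`. -/
theorem relCommProb_bounds {R : Type*} [NonUnitalRing R] [Fintype R] (hR : 1 < Nat.card R)
    (p : ℕ) (hp : p.Prime) (hdvd : p ∣ Nat.card R)
    (hmin : ∀ q : ℕ, q.Prime → q ∣ Nat.card R → p ≤ q) (S : NonUnitalSubring R) :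
    (Nat.card (zCenter S) : ℚ) / (Nat.card S : ℚ) +
        (p : ℚ) * ((Nat.card S : ℚ) - (Nat.card (zCenter S) : ℚ)) /
          ((Nat.card S : ℚ) * (Nat.card R : ℚ)) ≤
      relCommProb R (S : Set R) Set.univ ∧
    relCommProb R (S : Set R) Set.univ ≤
      (((p : ℚ) - 1) * (Nat.card (zCenter S) : ℚ) + (Nat.card S : ℚ)) /
        ((p : ℚ) * (Nat.card S : ℚ)) :=
  relCommProb_bounds_general p hp hmin S
end

section
/- Let R be a finite (not necessarily unital, not necessarily commutative) ring with |R| > 1 and let p be the smallest prime dividing |R|. Then |Z(R)|/|R| + p(|R| − |Z(R)|)/|R|² ≤ Pr(R) ≤ ((p − 1)|Z(R)| + |R|)/(p·|R|). -/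
open scoped Pointwise

section Aux

variable {R : Type*} [NonUnitalRing R]

lemma mem_centIn_iff (x y : R) :
    y ∈ centIn (⊤ : NonUnitalSubring R) x ↔ y * x = x * y :=
  ⟨fun h => h.2, fun h => ⟨trivial, h⟩⟩

lemma mem_zCenter_iff (x : R) :
    x ∈ zCenter (⊤ : NonUnitalSubring R) ↔ ∀ r : R, x * r = r * x :=
  ⟨fun h => h.2, fun h => ⟨trivial, h⟩⟩

variable [Fintype R]

/-- The count of commuting pairs is the sum of centralizer cardinalities. -/
lemma card_commuting_pairs (S T : Set R) (hS : S = Set.univ) (hT : T = Set.univ) :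
    Nat.card {q : S × T // (q.1 : R) * (q.2 : R) = (q.2 : R) * (q.1 : R)} =
      ∑ x : R, Nat.card (centIn (⊤ : NonUnitalSubring R) x) := by
  classical
  subst hS hT
  calc Nat.card _ = Nat.card {q : R × R // q.1 * q.2 = q.2 * q.1} :=
        Nat.card_congr
          { toFun := fun q => ⟨(q.1.1, q.1.2), q.2⟩
            invFun := fun q => ⟨(⟨q.1.1, trivial⟩, ⟨q.1.2, trivial⟩), q.2⟩
            left_inv := fun q => rfl
            right_inv := fun q => rfl }
    _ = Nat.card (Σ x : R, (centIn (⊤ : NonUnitalSubring R) x)) :=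
        Nat.card_congr
          ((Equiv.subtypeProdEquivSigmaSubtype fun x y : R => x * y = y * x).trans
            (Equiv.sigmaCongrRight fun x =>
              Equiv.subtypeEquivRight fun y => by rw [mem_centIn_iff]; exact eq_comm))
    _ = ∑ x : R, Nat.card (centIn (⊤ : NonUnitalSubring R) x) := by
        rw [Nat.card_eq_fintype_card, Fintype.card_sigma]
        exact Finset.sum_congr rfl fun x _ => (Nat.card_eq_fintype_card).symm

lemma centIn_card_of_mem {x : R} (hx : x ∈ zCenter (⊤ : NonUnitalSubring R)) :
    Nat.card (centIn (⊤ : NonUnitalSubring R) x) = Nat.card R := by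
  have h : centIn (⊤ : NonUnitalSubring R) x = ⊤ := by
    ext y
    simp only [AddSubgroup.mem_top, iff_true, mem_centIn_iff]
    exact (((mem_zCenter_iff x).1 hx) y).symm
  rw [h]
  exact Nat.card_congr AddSubgroup.topEquiv.toEquiv

lemma centIn_card_lb {p : ℕ} (hp : p.Prime)
    (hmin : ∀ q : ℕ, q.Prime → q ∣ Nat.card R → p ≤ q)
    {x : R} (hx : x ∉ zCenter (⊤ : NonUnitalSubring R)) :
    p ≤ Nat.card (centIn (⊤ : NonUnitalSubring R) x) := by
  have hx0 : x ≠ 0 := fun h => hx (h ▸ (zCenter (⊤ : NonUnitalSubring R)).zero_mem)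
  have hxc : x ∈ centIn (⊤ : NonUnitalSubring R) x := (mem_centIn_iff x x).2 rfl
  have h1 : 1 < Nat.card (centIn (⊤ : NonUnitalSubring R) x) := by
    rw [Nat.one_lt_iff_ne_zero_and_ne_one]
    refine ⟨Nat.card_ne_zero.2 ⟨⟨⟨x, hxc⟩⟩, inferInstance⟩, fun h => ?_⟩
    obtain ⟨⟨a, ha⟩, hall⟩ := Nat.card_eq_one_iff_exists.1 h
    have h1 := hall ⟨x, hxc⟩
    have h2 := hall ⟨0, (centIn (⊤ : NonUnitalSubring R) x).zero_mem⟩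
    rw [Subtype.ext_iff] at h1 h2
    exact hx0 (h1.trans h2.symm)
  have hdvd : Nat.card (centIn (⊤ : NonUnitalSubring R) x) ∣ Nat.card R :=
    AddSubgroup.card_addSubgroup_dvd_card _
  calc p ≤ (Nat.card (centIn (⊤ : NonUnitalSubring R) x)).minFac :=
        hmin _ (Nat.minFac_prime (by omega)) ((Nat.minFac_dvd _).trans hdvd)
    _ ≤ _ := Nat.minFac_le (by omega)

lemma centIn_card_ub {p : ℕ} (hp : p.Prime)
    (hmin : ∀ q : ℕ, q.Prime → q ∣ Nat.card R → p ≤ q)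
    {x : R} (hx : x ∉ zCenter (⊤ : NonUnitalSubring R)) :
    p * Nat.card (centIn (⊤ : NonUnitalSubring R) x) ≤ Nat.card R := by
  rw [mem_zCenter_iff] at hx
  push_neg at hx
  obtain ⟨r, hr⟩ := hx
  have hne : centIn (⊤ : NonUnitalSubring R) x ≠ ⊤ := by
    intro h
    exact hr ((mem_centIn_iff x r).1 (h ▸ AddSubgroup.mem_top r)).symm
  obtain ⟨k, hk⟩ := (AddSubgroup.card_addSubgroup_dvd_card
    (centIn (⊤ : NonUnitalSubring R) x) : _ ∣ Nat.card R)
  have hc0 : 0 < Nat.card (centIn (⊤ : NonUnitalSubring R) x) := Nat.card_pos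
  have hN0 : 0 < Nat.card R := Nat.card_pos
  have hk1 : 1 < k := by
    rcases Nat.lt_or_ge k 2 with h | h
    · interval_cases k
      · omega
      · exact absurd (AddSubgroup.eq_top_of_card_eq _ (by omega)) hne
    · omega
  have hkdvd : k ∣ Nat.card R := ⟨_, by rw [hk, mul_comm]⟩
  have hpk : p ≤ k :=
    le_trans (hmin _ (Nat.minFac_prime (by omega)) ((Nat.minFac_dvd _).trans hkdvd))
      (Nat.minFac_le (by omega))
  calc p * Nat.card (centIn (⊤ : NonUnitalSubring R) x)
      ≤ k * Nat.card (centIn (⊤ : NonUnitalSubring R) x) := Nat.mul_le_mul_right _ hpk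
    _ = Nat.card R := by rw [hk, mul_comm]

end Aux

/-- If `p` is the smallest prime dividing `|R|`, then
`|Z(R)|/|R| + p(|R| − |Z(R)|)/|R|² ≤ Pr(R) ≤ ((p−1)|Z(R)| + |R|)/(p|R|)`. -/
theorem commProb_bounds {R : Type*} [NonUnitalRing R] [Fintype R] (hR : 1 < Nat.card R)
    (p : ℕ) (hp : p.Prime) (hdvd : p ∣ Nat.card R)
    (hmin : ∀ q : ℕ, q.Prime → q ∣ Nat.card R → p ≤ q) :
    (Nat.card (zCenter (⊤ : NonUnitalSubring R)) : ℚ) / (Nat.card R : ℚ) +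
        (p : ℚ) * ((Nat.card R : ℚ) - (Nat.card (zCenter (⊤ : NonUnitalSubring R)) : ℚ)) /
          ((Nat.card R : ℚ) ^ 2) ≤
      relCommProb R Set.univ Set.univ ∧
    relCommProb R Set.univ Set.univ ≤
      (((p : ℚ) - 1) * (Nat.card (zCenter (⊤ : NonUnitalSubring R)) : ℚ) + (Nat.card R : ℚ)) /
        ((p : ℚ) * (Nat.card R : ℚ)) := by
  classical
  have hPr : relCommProb R Set.univ Set.univ =
      ((∑ x : R, Nat.card (centIn (⊤ : NonUnitalSubring R) x) : ℕ) : ℚ) /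
        ((Nat.card R : ℚ) * (Nat.card R : ℚ)) := by
    rw [relCommProb, card_commuting_pairs _ _ rfl rfl, Nat.card_univ]
  -- notation
  have hN0 : 0 < Nat.card R := Nat.card_pos
  -- split the sum
  have hsplit : (∑ x : R, Nat.card (centIn (⊤ : NonUnitalSubring R) x)) =
      (∑ x ∈ Finset.univ.filter (fun x : R => x ∈ zCenter (⊤ : NonUnitalSubring R)),
        Nat.card (centIn (⊤ : NonUnitalSubring R) x)) +
      ∑ x ∈ Finset.univ.filter (fun x : R => ¬ x ∈ zCenter (⊤ : NonUnitalSubring R)),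
        Nat.card (centIn (⊤ : NonUnitalSubring R) x) :=
    (Finset.sum_filter_add_sum_filter_not _ _ _).symm
  have hzcard : (Finset.univ.filter
      (fun x : R => x ∈ zCenter (⊤ : NonUnitalSubring R))).card =
      Nat.card (zCenter (⊤ : NonUnitalSubring R)) := by
    rw [Nat.card_eq_fintype_card, Fintype.card_subtype]
  have hzm : Nat.card (zCenter (⊤ : NonUnitalSubring R)) +
      (Finset.univ.filter
        (fun x : R => ¬ x ∈ zCenter (⊤ : NonUnitalSubring R))).card = Nat.card R := by
    rw [← hzcard, Finset.card_filter_add_card_filter_not, Finset.card_univ,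
      Nat.card_eq_fintype_card]
  have hsumZ : (∑ x ∈ Finset.univ.filter
        (fun x : R => x ∈ zCenter (⊤ : NonUnitalSubring R)),
        Nat.card (centIn (⊤ : NonUnitalSubring R) x)) =
      Nat.card (zCenter (⊤ : NonUnitalSubring R)) * Nat.card R := by
    rw [Finset.sum_congr rfl fun x hx => centIn_card_of_mem (by simpa using hx),
      Finset.sum_const, hzcard, smul_eq_mul]
  set N := Nat.card R with hNdef
  set z := Nat.card (zCenter (⊤ : NonUnitalSubring R)) with hzdef
  set m := (Finset.univ.filter
    (fun x : R => ¬ x ∈ zCenter (⊤ : NonUnitalSubring R))).card with hmdef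
  set S := ∑ x : R, Nat.card (centIn (⊤ : NonUnitalSubring R) x) with hSdef
  have hA : z * N + m * p ≤ S := by
    rw [hsplit, hsumZ]
    refine Nat.add_le_add_left ?_ _
    calc m * p = ∑ _x ∈ Finset.univ.filter
          (fun x : R => ¬ x ∈ zCenter (⊤ : NonUnitalSubring R)), p := by
          rw [Finset.sum_const, smul_eq_mul]
      _ ≤ _ := Finset.sum_le_sum fun x hx => centIn_card_lb hp hmin (by simpa using hx)
  have hB : p * S ≤ z * (p * N) + m * N := by
    rw [hsplit, Nat.mul_add]
    refine Nat.add_le_add (le_of_eq (by rw [hsumZ]; ring)) ?_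
    rw [Finset.mul_sum]
    calc ∑ x ∈ Finset.univ.filter
          (fun x : R => ¬ x ∈ zCenter (⊤ : NonUnitalSubring R)),
          p * Nat.card (centIn (⊤ : NonUnitalSubring R) x)
        ≤ ∑ _x ∈ Finset.univ.filter
          (fun x : R => ¬ x ∈ zCenter (⊤ : NonUnitalSubring R)), N :=
          Finset.sum_le_sum fun x hx => centIn_card_ub hp hmin (by simpa using hx)
      _ = m * N := by rw [Finset.sum_const, smul_eq_mul]
  -- rational arithmetic
  have hNQ : (0 : ℚ) < N := by exact_mod_cast hN0
  have hpQ : (0 : ℚ) < p := by exact_mod_cast hp.pos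
  have hzmQ : (z : ℚ) + m = N := by exact_mod_cast hzm
  have hmQ : (m : ℚ) = (N : ℚ) - z := by linarith
  have hAQ : (z : ℚ) * N + m * p ≤ (S : ℚ) := by exact_mod_cast hA
  have hBQ : (p : ℚ) * S ≤ z * (p * N) + m * N := by exact_mod_cast hB
  constructor
  · rw [hPr]
    have heq : (z : ℚ) / N + (p : ℚ) * ((N : ℚ) - z) / (N : ℚ) ^ 2 =
        ((z : ℚ) * N + m * p) / ((N : ℚ) * N) := by
      rw [hmQ]
      field_simp
    rw [heq]
    gcongr
  · rw [hPr, div_le_div_iff₀ (by positivity) (by positivity)]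
    calc (S : ℚ) * ((p : ℚ) * N) = ((p : ℚ) * S) * N := by ring
      _ ≤ ((z : ℚ) * (p * N) + m * N) * N := by gcongr
      _ = (((p : ℚ) - 1) * z + N) * ((N : ℚ) * N) := by rw [hmQ]; ring
end

section
/- Let R be a finite (not necessarily unital, not necessarily commutative) ring with |R| > 1, let p be the smallest prime dividing |R|, and let S be a subring of R. If S is not contained in the center Z(R) and S is commutative, then Pr(S, R) ≤ (2p − 1)/p². -/
open scoped Pointwise

lemma mem_centIn {R : Type*} [NonUnitalRing R] {S : NonUnitalSubring R} {r x : R} :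
    x ∈ centIn S r ↔ x ∈ S ∧ x * r = r * x := Iff.rfl

lemma mem_zCenter {R : Type*} [NonUnitalRing R] {S : NonUnitalSubring R} {x : R} :
    x ∈ zCenter S ↔ x ∈ S ∧ ∀ r : R, x * r = r * x := Iff.rfl

lemma aux_card_mul_le {G : Type*} [AddGroup G] [Finite G] {p : ℕ}
    (hmin : ∀ q : ℕ, q.Prime → q ∣ Nat.card G → p ≤ q)
    (H : AddSubgroup G) (hH : H ≠ ⊤) : Nat.card H * p ≤ Nat.card G := by
  obtain ⟨k, hk⟩ := H.card_addSubgroup_dvd_card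
  have hG : 0 < Nat.card G := Nat.card_pos
  have hk0 : k ≠ 0 := by rintro rfl; rw [hk, mul_zero] at hG; exact absurd hG (lt_irrefl 0)
  have hk1 : k ≠ 1 := by
    rintro rfl
    rw [mul_one] at hk
    exact hH (AddSubgroup.eq_top_of_card_eq H hk.symm)
  have hple : p ≤ k :=
    le_trans (hmin k.minFac (Nat.minFac_prime hk1)
      (dvd_trans (Nat.minFac_dvd k) ⟨Nat.card H, by rw [hk]; ring⟩))
      (Nat.minFac_le (Nat.pos_of_ne_zero hk0))
  calc Nat.card H * p ≤ Nat.card H * k := Nat.mul_le_mul_left _ hple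
    _ = Nat.card G := hk.symm

lemma aux_nat_card_sigma {ι : Type*} [Fintype ι] {α : ι → Type*} [∀ i, Fintype (α i)] :
    Nat.card (Σ i, α i) = ∑ i, Nat.card (α i) := by
  simp [Nat.card_eq_fintype_card, Fintype.card_sigma]

/-- If `p` is the smallest prime dividing `|R|`, `S` is a commutative subring of `R` not
contained in the center `Z(R)`, then `Pr(S, R) ≤ (2p − 1)/p²`. -/
theorem relCommProb_le_of_commutative {R : Type*} [NonUnitalRing R] [Fintype R]
    (hR : 1 < Nat.card R) (p : ℕ) (hp : p.Prime) (hdvd : p ∣ Nat.card R)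
    (hmin : ∀ q : ℕ, q.Prime → q ∣ Nat.card R → p ≤ q) (S : NonUnitalSubring R)
    (hnc : ¬ (S : Set R) ⊆ ((zCenter (⊤ : NonUnitalSubring R) : AddSubgroup R) : Set R))
    (hcomm : ∀ s ∈ S, ∀ t ∈ S, s * t = t * s) :
    relCommProb R (S : Set R) Set.univ ≤ (2 * (p : ℚ) - 1) / (p : ℚ) ^ 2 := by
  classical
  set N := Nat.card R with hNdef
  have hN0 : 0 < N := Nat.card_pos
  -- the counting equivalence
  have e1 : {q : ↥(S : Set R) × ↥(Set.univ : Set R) //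
        (q.1 : R) * (q.2 : R) = (q.2 : R) * (q.1 : R)} ≃
      Σ s : ↥(S : Set R), {t : ↥(Set.univ : Set R) // (s : R) * (t : R) = (t : R) * (s : R)} :=
    Equiv.subtypeProdEquivSigmaSubtype
      (fun (s : ↥(S : Set R)) (t : ↥(Set.univ : Set R)) => (s : R) * (t : R) = (t : R) * (s : R))
  have e2 : ∀ s : ↥(S : Set R),
      Nat.card {t : ↥(Set.univ : Set R) // (s : R) * (t : R) = (t : R) * (s : R)} =
        Nat.card (centIn (⊤ : NonUnitalSubring R) (s : R)) := by
    intro s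
    refine Nat.card_congr ((Equiv.Set.univ R).subtypeEquiv fun t => ?_)
    simp only [Equiv.Set.univ_apply, mem_centIn, NonUnitalSubring.mem_top, true_and]
    exact ⟨fun h => h.symm, fun h => h.symm⟩
  have hT : Nat.card {q : ↥(S : Set R) × ↥(Set.univ : Set R) //
        (q.1 : R) * (q.2 : R) = (q.2 : R) * (q.1 : R)} =
      ∑ s : ↥(S : Set R), Nat.card (centIn (⊤ : NonUnitalSubring R) (s : R)) := by
    rw [Nat.card_congr e1, aux_nat_card_sigma]
    exact Finset.sum_congr rfl fun s _ => e2 s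
  set T := Nat.card {q : ↥(S : Set R) × ↥(Set.univ : Set R) //
      (q.1 : R) * (q.2 : R) = (q.2 : R) * (q.1 : R)} with hTdef
  set Sc := Nat.card ↥(S : Set R) with hScdef
  have hSc0 : 0 < Sc := Nat.card_pos_iff.mpr ⟨⟨⟨0, S.zero_mem⟩⟩, Set.toFinite _⟩
  -- centralizer bounds
  have hcent_central : ∀ s : ↥(S : Set R), ((s : R) ∈ zCenter (⊤ : NonUnitalSubring R)) →
      Nat.card (centIn (⊤ : NonUnitalSubring R) (s : R)) = N := by
    intro s hs
    have : centIn (⊤ : NonUnitalSubring R) (s : R) = ⊤ := by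
      ext x
      simp only [mem_centIn, NonUnitalSubring.mem_top, true_and, AddSubgroup.mem_top, iff_true]
      exact (hs.2 x).symm
    rw [this]
    exact Nat.card_congr AddSubgroup.topEquiv.toEquiv
  have hcent_noncentral : ∀ s : ↥(S : Set R), ((s : R) ∉ zCenter (⊤ : NonUnitalSubring R)) →
      Nat.card (centIn (⊤ : NonUnitalSubring R) (s : R)) * p ≤ N := by
    intro s hs
    refine aux_card_mul_le hmin _ ?_
    intro htop
    apply hs
    refine ⟨NonUnitalSubring.mem_top _, fun r => ?_⟩
    have hr : r ∈ centIn (⊤ : NonUnitalSubring R) (s : R) := htop ▸ AddSubgroup.mem_top r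
    exact hr.2.symm
  -- the central count
  set Zset := Finset.univ.filter
    (fun s : ↥(S : Set R) => (s : R) ∈ zCenter (⊤ : NonUnitalSubring R)) with hZsetdef
  have hZc_le : Zset.card ≤ Fintype.card ↥(S : Set R) := by
    simpa using Finset.card_filter_le Finset.univ _
  have hScFin : Sc = Fintype.card ↥(S : Set R) := Nat.card_eq_fintype_card
  -- the main sum bound
  have hsum : T * p ≤ Zset.card * N * p + (Fintype.card ↥(S : Set R) - Zset.card) * N := by
    rw [hT, Finset.sum_mul, ← Finset.sum_filter_add_sum_filter_not Finset.univ
      (fun s : ↥(S : Set R) => (s : R) ∈ zCenter (⊤ : NonUnitalSubring R))]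
    refine add_le_add ?_ ?_
    · refine le_of_eq ?_
      rw [Finset.sum_congr rfl (fun s hs => by
        rw [hcent_central s (Finset.mem_filter.mp hs).2]), Finset.sum_const, smul_eq_mul,
        mul_assoc]
    · calc _ ≤ (Finset.univ.filter
            (fun s : ↥(S : Set R) => ¬(s : R) ∈ zCenter (⊤ : NonUnitalSubring R))).card * N := by
            refine Finset.sum_le_card_nsmul _ _ N fun s hs => ?_
            exact hcent_noncentral s (Finset.mem_filter.mp hs).2
        _ = (Fintype.card ↥(S : Set R) - Zset.card) * N := by
            congr 1
            have h2 := Finset.card_filter_add_card_filter_not (s := Finset.univ)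
              (p := fun s : ↥(S : Set R) => (s : R) ∈ zCenter (⊤ : NonUnitalSubring R))
            rw [Finset.card_univ] at h2
            rw [hZsetdef]
            omega
  -- relate Zset.card with the card of zCenter S
  have hZeq : Nat.card (zCenter S) = Zset.card := by
    rw [hZsetdef, ← Fintype.card_subtype, ← Nat.card_eq_fintype_card]
    refine Nat.card_congr ⟨fun x => ⟨⟨(x : R), SetLike.mem_coe.mpr x.2.1⟩,
        ⟨NonUnitalSubring.mem_top _, x.2.2⟩⟩,
      fun s => ⟨(s.1 : R), ⟨SetLike.mem_coe.mp s.1.2, s.2.2⟩⟩, fun x => rfl, fun s => rfl⟩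
  -- Z(S,R) is a proper subgroup of S
  have hZS : Nat.card (zCenter S) * p ≤ Sc := by
    set A := S.toAddSubgroup with hAdef
    have hle : zCenter S ≤ A := fun x hx => NonUnitalSubring.mem_toAddSubgroup (s := S).mpr hx.1
    have hcardA : Nat.card ↥A = Sc := by
      refine Nat.card_congr (Equiv.subtypeEquivRight fun x => ?_)
      rw [NonUnitalSubring.mem_toAddSubgroup (s := S), SetLike.mem_coe]
    have hminA : ∀ q : ℕ, q.Prime → q ∣ Nat.card ↥A → p ≤ q := fun q hq hqdvd =>
      hmin q hq (hqdvd.trans A.card_addSubgroup_dvd_card)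
    have hH : (zCenter S).addSubgroupOf A ≠ ⊤ := by
      obtain ⟨x, hxS, hxZ⟩ := Set.not_subset.mp hnc
      intro htop
      apply hxZ
      have hxA : x ∈ A := NonUnitalSubring.mem_toAddSubgroup (s := S).mpr (SetLike.mem_coe.mp hxS)
      have : (⟨x, hxA⟩ : ↥A) ∈ (zCenter S).addSubgroupOf A := htop ▸ AddSubgroup.mem_top _
      have hx : x ∈ zCenter S := AddSubgroup.mem_addSubgroupOf.mp this
      exact SetLike.mem_coe.mpr ⟨NonUnitalSubring.mem_top _, hx.2⟩
    have := aux_card_mul_le hminA _ hH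
    rwa [Nat.card_congr (AddSubgroup.addSubgroupOfEquivOfLe hle).toEquiv, hcardA] at this
  -- now conclude in ℚ
  have hNu : Nat.card ↥(Set.univ : Set R) = N := Nat.card_congr (Equiv.Set.univ R)
  rw [relCommProb, ← hTdef, ← hScdef, hNu]
  have hp2 : 2 ≤ p := hp.two_le
  rw [div_le_div_iff₀ (by positivity) (by positivity)]
  rw [← hScFin] at hsum hZc_le
  have q1 : (T : ℚ) * p ≤ (Zset.card : ℚ) * N * p + ((Sc : ℚ) - (Zset.card : ℚ)) * N := by
    have hcast : ((Sc - Zset.card : ℕ) : ℚ) = (Sc : ℚ) - (Zset.card : ℚ) := Nat.cast_sub hZc_le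
    calc (T : ℚ) * p ≤ ((Zset.card * N * p + (Sc - Zset.card) * N : ℕ) : ℚ) := by
          exact_mod_cast hsum
      _ = _ := by push_cast [hcast]; try ring
  have q2 : (Zset.card : ℚ) * p ≤ (Sc : ℚ) := by
    rw [← hZeq] at *
    exact_mod_cast hZS
  have hpq : (2 : ℚ) ≤ (p : ℚ) := by exact_mod_cast hp2
  have hNq : (1 : ℚ) ≤ (N : ℚ) := by exact_mod_cast hN0
  nlinarith [mul_le_mul_of_nonneg_right q1 (by positivity : (0:ℚ) ≤ (p:ℚ)),
    mul_le_mul_of_nonneg_right q2 (by nlinarith : (0:ℚ) ≤ (N:ℚ) * ((p:ℚ) - 1)),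
    mul_pos (lt_of_lt_of_le zero_lt_one hNq) (by positivity : (0:ℚ) < (p:ℚ)^2)]
end

section
/- Let R be a finite (not necessarily unital, not necessarily commutative) ring, let S be a commutative subring of R, and let p be a prime such that Pr(S, R) = (2p − 1)/p². Then p divides |R|. Moreover, if p is the smallest prime dividing |R|, then the additive quotient group S/Z(S, R) is isomorphic to ℤ_p (the cyclic group of order p). -/
open scoped Pointwise

private def centr {R : Type*} [NonUnitalRing R] (s : R) : AddSubgroup R where
  carrier := {r | s * r = r * s}
  zero_mem' := by simp
  add_mem' := by
    rintro a b (ha : _ = _) (hb : _ = _)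
    show s * (a + b) = (a + b) * s
    rw [mul_add, add_mul, ha, hb]
  neg_mem' := by
    rintro a (ha : _ = _)
    show s * (-a) = (-a) * s
    rw [mul_neg, neg_mul, ha]

set_option maxHeartbeats 1000000 in
/-- If `S` is a commutative subring of a finite ring `R` with `Pr(S, R) = (2p − 1)/p²` for a
prime `p`, then `p ∣ |R|`; moreover, if `p` is the smallest prime dividing `|R|`, then the
additive quotient group `S/Z(S, R)` is isomorphic to `ℤ_p`. -/
theorem quotient_iso_of_relCommProb_eq {R : Type*} [NonUnitalRing R] [Fintype R]
    (S : NonUnitalSubring R) (hcomm : ∀ s ∈ S, ∀ t ∈ S, s * t = t * s)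
    (p : ℕ) (hp : p.Prime)
    (h : relCommProb R (S : Set R) Set.univ = (2 * (p : ℚ) - 1) / (p : ℚ) ^ 2) :
    p ∣ Nat.card R ∧
    ((∀ q : ℕ, q.Prime → q ∣ Nat.card R → p ≤ q) →
      Nonempty ((S.toAddSubgroup ⧸ (zCenter S).addSubgroupOf S.toAddSubgroup) ≃+ ZMod p)) := by
  classical
  have hq := h
  rw [relCommProb, Nat.card_univ] at hq
  set N := Nat.card R with hN
  set n := Nat.card (S : Set R) with hn
  set m := Nat.card {q : ↥(S : Set R) × ↥(Set.univ : Set R) //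
      (q.1 : R) * (q.2 : R) = (q.2 : R) * (q.1 : R)} with hm
  have hNpos : 0 < N := Nat.card_pos
  have hnpos : 0 < n := by
    have : Nonempty (S : Set R) := ⟨⟨0, S.zero_mem⟩⟩
    exact Nat.card_pos
  have hp2 : 2 ≤ p := hp.two_le
  have hppos : (0 : ℚ) < (p : ℚ) := by positivity
  have hEq : (m : ℚ) * (p : ℚ) ^ 2 = (2 * (p : ℚ) - 1) * ((n : ℚ) * (N : ℚ)) := by
    rw [div_eq_div_iff (by positivity) (by positivity)] at hq
    linarith [hq]
  -- cast to a natural-number equation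
  have hNat : m * p ^ 2 = (2 * p - 1) * (n * N) := by
    have h1 : ((2 * p - 1 : ℕ) : ℚ) = 2 * (p : ℚ) - 1 := by
      have h2 : 1 ≤ 2 * p := by omega
      push_cast [h2]; ring
    have : ((m * p ^ 2 : ℕ) : ℚ) = (((2 * p - 1) * (n * N) : ℕ) : ℚ) := by
      push_cast [h1]
      push_cast [h1] at hEq ⊢
      linarith [hEq]
    exact_mod_cast this
  -- |S| divides |R|
  have hnd : n ∣ N := by
    have he : ↥(S : Set R) ≃ ↥S.toAddSubgroup :=
      Equiv.subtypeEquivRight (fun x => Iff.rfl)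
    rw [hn, Nat.card_congr he]
    exact AddSubgroup.card_addSubgroup_dvd_card S.toAddSubgroup
  -- Part 1 : p ∣ N
  have hcop : Nat.Coprime (p ^ 2) (2 * p - 1) := by
    have hnd2 : ¬ p ∣ (2 * p - 1) := by
      intro hd
      have h2 : p ∣ 2 * p := dvd_mul_left p 2
      have h4 := Nat.dvd_sub h2 hd
      have h3 : 2 * p - (2 * p - 1) = 1 := by omega
      rw [h3] at h4
      have h5 := Nat.dvd_one.1 h4
      omega
    exact ((Nat.Prime.coprime_iff_not_dvd hp).2 hnd2).pow_left 2
  have hpN : p ∣ N := by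
    have h1 : p ^ 2 ∣ (2 * p - 1) * (n * N) := ⟨m, by rw [← hNat]; ring⟩
    have h2 : p ^ 2 ∣ n * N := (Nat.Coprime.dvd_of_dvd_mul_left hcop) h1
    have h3 : n * N ∣ N * N := mul_dvd_mul_right hnd N
    have h4 : p ^ 2 ∣ N ^ 2 := by
      have h5 := h2.trans h3
      rwa [← pow_two] at h5
    exact hp.dvd_of_dvd_pow (dvd_trans (dvd_pow_self p (by norm_num)) h4)
  refine ⟨hpN, fun hmin => ?_⟩
  -- fibration : m = ∑ centralizer cards
  have e : {q : ↥(S : Set R) × ↥(Set.univ : Set R) //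
      (q.1 : R) * (q.2 : R) = (q.2 : R) * (q.1 : R)} ≃
      Σ s : ↥(S : Set R), ↥(centr (s : R)) :=
    { toFun := fun x => ⟨x.1.1, ⟨x.1.2.1, x.2⟩⟩
      invFun := fun y => ⟨(y.1, ⟨y.2.1, Set.mem_univ _⟩), y.2.2⟩
      left_inv := fun x => rfl
      right_inv := fun y => rfl }
  have hmsum : m = ∑ s : ↥(S : Set R), Nat.card ↥(centr (s : R)) := by
    rw [hm, Nat.card_congr e, Nat.card_eq_fintype_card, Fintype.card_sigma]
    simp [Nat.card_eq_fintype_card]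
  -- central / non-central split
  set P : ↥(S : Set R) → Prop := fun s => (s : R) ∈ zCenter S with hP
  set z := Nat.card ↥(zCenter S) with hz
  set w := (Finset.univ.filter (fun s : ↥(S : Set R) => ¬ P s)).card with hw
  have hzcard : (Finset.univ.filter (fun s : ↥(S : Set R) => P s)).card = z := by
    rw [hz, Nat.card_eq_fintype_card, ← Fintype.card_subtype]
    refine Fintype.card_congr ⟨fun x => ⟨x.1.1, x.2⟩, fun x => ⟨⟨x.1, x.2.1⟩, x.2⟩,
      fun x => rfl, fun x => rfl⟩
  have hzw : z + w = n := by
    rw [← hzcard, hw, Finset.card_filter_add_card_filter_not,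
      Finset.card_univ, hn, Nat.card_eq_fintype_card]
  have hzpos : 0 < z := by
    rw [hz]; exact Nat.card_pos
  -- centralizer of a central element is everything
  have hcent_top : ∀ s : ↥(S : Set R), P s → Nat.card ↥(centr (s : R)) = N := by
    intro s hs
    rw [hN]
    exact Nat.card_congr (Equiv.subtypeUnivEquiv (fun r => hs.2 r))
  -- centralizer of a non-central element has index ≥ p
  have hcent_small : ∀ s : ↥(S : Set R), ¬ P s → p * Nat.card ↥(centr (s : R)) ≤ N := by
    intro s hs
    have hsS : (s : R) ∈ S := s.2
    have hex : ∃ r : R, ¬ ((s : R) * r = r * (s : R)) := by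
      by_contra hcon
      push_neg at hcon
      exact hs ⟨hsS, hcon⟩
    obtain ⟨r, hr⟩ := hex
    set c := Nat.card ↥(centr (s : R)) with hc
    have hcd : c ∣ N := AddSubgroup.card_addSubgroup_dvd_card (centr (s : R))
    have hcpos : 0 < c := Nat.card_pos
    have hne : centr ((s : R)) ≠ ⊤ := by
      intro htop
      exact hr (htop ▸ AddSubgroup.mem_top r : r ∈ centr (s : R))
    have hlt : c < N :=
      lt_of_le_of_ne (Nat.le_of_dvd hNpos hcd)
        (fun hcN => hne (AddSubgroup.eq_top_of_card_eq _ hcN))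
    obtain ⟨t, ht⟩ := hcd
    have htgt : 1 < t := by
      rcases Nat.lt_or_ge t 2 with h1 | h1
      · interval_cases t <;> omega
      · omega
    have htd : t ∣ N := ⟨c, by rw [ht, mul_comm]⟩
    have hq2 := hmin t.minFac (Nat.minFac_prime (by omega)) ((Nat.minFac_dvd t).trans htd)
    have hpt : p ≤ t := hq2.trans (Nat.minFac_le (by omega))
    calc p * c ≤ t * c := Nat.mul_le_mul_right c hpt
      _ = N := by rw [ht, mul_comm]
  -- the inequality p * m ≤ p * z * N + w * N
  have hble : p * m ≤ p * z * N + w * N := by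
    rw [hmsum, Finset.mul_sum]
    rw [← Finset.sum_filter_add_sum_filter_not Finset.univ P]
    have h1 : ∑ s ∈ Finset.univ.filter (fun s : ↥(S : Set R) => P s),
        p * Nat.card ↥(centr (s : R)) = p * z * N := by
      rw [Finset.sum_congr rfl (fun s hs => by
        rw [hcent_top s (Finset.mem_filter.1 hs).2]), Finset.sum_const, hzcard,
        smul_eq_mul]
      ring
    have h2 : ∑ s ∈ Finset.univ.filter (fun s : ↥(S : Set R) => ¬ P s),
        p * Nat.card ↥(centr (s : R)) ≤ w * N := by
      calc ∑ s ∈ Finset.univ.filter (fun s : ↥(S : Set R) => ¬ P s),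
          p * Nat.card ↥(centr (s : R))
          ≤ ∑ _s ∈ Finset.univ.filter (fun s : ↥(S : Set R) => ¬ P s), N :=
            Finset.sum_le_sum (fun s hs => hcent_small s (Finset.mem_filter.1 hs).2)
        _ = w * N := by rw [Finset.sum_const, hw, smul_eq_mul]
    omega
  -- deduce n ≤ p * z
  have hkey : n ≤ p * z := by
    have hble' : (p : ℚ) * m ≤ p * z * N + w * N := by exact_mod_cast hble
    have hzw' : (z : ℚ) + w = n := by exact_mod_cast hzw
    have hN1 : (1 : ℚ) ≤ N := by exact_mod_cast hNpos
    have hz1 : (1 : ℚ) ≤ z := by exact_mod_cast hzpos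
    have hp1 : (2 : ℚ) ≤ p := by exact_mod_cast hp2
    have h1 : (p : ℚ) * ((p : ℚ) * m) ≤ (p : ℚ) * ((p : ℚ) * z * N + w * N) :=
      mul_le_mul_of_nonneg_left hble' hppos.le
    have h2 : ((2 * (p : ℚ) - 1) * n) * N ≤ ((p : ℚ) * p * z + p * w) * N := by
      nlinarith [h1, hEq]
    have h3 : (2 * (p : ℚ) - 1) * (z + w) ≤ (p : ℚ) * p * z + p * w := by
      have := le_of_mul_le_mul_right h2 (by linarith : (0 : ℚ) < N)
      rw [← hzw'] at this
      linarith [this]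
    have h4 : ((p : ℚ) - 1) * w ≤ ((p : ℚ) - 1) * (((p : ℚ) - 1) * z) := by nlinarith [h3]
    have h5 : (w : ℚ) ≤ ((p : ℚ) - 1) * z :=
      le_of_mul_le_mul_left h4 (by linarith : (0 : ℚ) < (p : ℚ) - 1)
    have hgoal : (n : ℚ) ≤ p * z := by
      rw [← hzw']
      linarith [h5]
    exact_mod_cast hgoal
  -- quotient cardinality
  set Q := S.toAddSubgroup ⧸ (zCenter S).addSubgroupOf S.toAddSubgroup with hQ
  set k := Nat.card Q with hk
  have hle : zCenter S ≤ S.toAddSubgroup := fun x hx => hx.1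
  have hzsub : Nat.card ↥((zCenter S).addSubgroupOf S.toAddSubgroup) = z := by
    rw [hz]
    exact Nat.card_congr (AddSubgroup.addSubgroupOfEquivOfLe hle).toEquiv
  have hlag : n = k * z := by
    have := AddSubgroup.card_eq_card_quotient_mul_card_addSubgroup
      ((zCenter S).addSubgroupOf S.toAddSubgroup)
    rw [hzsub] at this
    rw [hn, Nat.card_congr (Equiv.subtypeEquivRight (fun x => Iff.rfl) :
      ↥(S : Set R) ≃ ↥S.toAddSubgroup)]
    exact this
  have hkle : k ≤ p := by
    have := hlag ▸ hkey
    exact Nat.le_of_mul_le_mul_right (by omega) hzpos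
  have hkne1 : k ≠ 1 := by
    intro hk1
    have hnz : n = z := by rw [hlag, hk1, one_mul]
    have hw0 : w = 0 := by omega
    have hmez : m = n * N := by
      rw [hmsum, ← Finset.sum_filter_add_sum_filter_not Finset.univ P]
      have hwempty : Finset.univ.filter (fun s : ↥(S : Set R) => ¬ P s) = ∅ :=
        Finset.card_eq_zero.1 (hw ▸ hw0)
      rw [hwempty, Finset.sum_empty, add_zero,
        Finset.sum_congr rfl (fun s hs => hcent_top s (Finset.mem_filter.1 hs).2),
        Finset.sum_const, hzcard, smul_eq_mul, hnz]
    rw [hmez] at hNat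
    have hcancel : p ^ 2 = 2 * p - 1 := by
      have hpos : 0 < n * N := Nat.mul_pos hnpos hNpos
      have := hNat
      rw [mul_comm (n * N) (p ^ 2)] at this
      exact Nat.eq_of_mul_eq_mul_right hpos (by linarith [this])
    have h7 : p * p = 2 * p - 1 := by rw [← hcancel]; ring
    have h6 : 2 * p ≤ p * p := Nat.mul_le_mul_right p hp2
    omega
  have hkpos : 0 < k := by
    rcases Nat.eq_zero_or_pos k with h0 | h0
    · rw [h0, zero_mul] at hlag; omega
    · exact h0
  have hkd : k ∣ N := dvd_trans ⟨z, hlag.symm ▸ rfl⟩ hnd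
  have hkp : k = p := by
    have hq3 := hmin k.minFac (Nat.minFac_prime hkne1) ((Nat.minFac_dvd k).trans hkd)
    have := Nat.minFac_le hkpos
    omega
  -- conclude with the cyclic structure
  haveI : Fact p.Prime := ⟨hp⟩
  haveI hcyc : IsAddCyclic Q := isAddCyclic_of_prime_card (hk ▸ hkp : Nat.card Q = p)
  exact ⟨addEquivOfAddCyclicCardEq (by rw [← hk, hkp, Nat.card_zmod])⟩
end

section
/- Let R be a finite (not necessarily unital, not necessarily commutative) ring, let S be a non-commutative subring of R, and let p be a prime such that Pr(S, R) = (p² + p − 1)/p³. Then p divides |R|. Moreover, if p is the smallest prime dividing |R|, then the additive quotient group S/Z(S, R) is isomorphic to ℤ_p × ℤ_p. -/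
open scoped Pointwise

/-!
Write `k = |S : Z(S, R)|` and let `p` be the smallest prime dividing `|R|`. Counting commuting
pairs fibrewise, `|S| |R| Pr(S, R) = ∑_{s ∈ S} |C_R(s)|`. A central `s` contributes `|R|`; for any
other `s` the centralizer `C_R(s)` is a proper additive subgroup of `R`, so its index is at least
`p`. Hence `Pr(S, R) ≤ (k + p - 1) / (p k)`, and the given value of `Pr(S, R)` forces `k ≤ p²`.
As for groups, `S / Z(S, R)` cyclic would make `S` commutative, so `k` is neither `1` nor a prime,
and all its prime factors are at least `p`: thus `k = p²`, and a non-cyclic group of order `p²`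
is `ℤ_p × ℤ_p`. That `p ∣ |R|` follows from `p³ ∑_{s} |C_R(s)| = (p² + p - 1) |S| |R|`, as
`p ∤ p² + p - 1` and `|S| ∣ |R|`.
-/

open Finset

namespace Nat

lemma le_of_forall_prime_dvd_le {p n : ℕ} (hn1 : n ≠ 1) (hn0 : n ≠ 0)
    (hmin : ∀ q, q.Prime → q ∣ n → p ≤ q) : p ≤ n :=
  (hmin _ (minFac_prime hn1) (minFac_dvd n)).trans (minFac_le (pos_of_ne_zero hn0))

lemma sq_le_of_forall_prime_dvd_le {p n : ℕ} (hn1 : n ≠ 1) (hn0 : n ≠ 0) (hnp : ¬ n.Prime)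
    (hmin : ∀ q, q.Prime → q ∣ n → p ≤ q) : p ^ 2 ≤ n := by
  set d := n / n.minFac
  have hnd : n = n.minFac * d := (Nat.mul_div_cancel' (minFac_dvd n)).symm
  have hd1 : d ≠ 1 := fun hd => hnp (by rw [hnd, hd, mul_one]; exact minFac_prime hn1)
  have hd0 : d ≠ 0 := fun hd => hn0 (by rw [hnd, hd, mul_zero])
  have hpd : p ≤ d := le_of_forall_prime_dvd_le hd1 hd0 fun q hq hqd =>
    hmin q hq (hqd.trans (Dvd.intro_left _ hnd.symm))
  calc p ^ 2 = p * p := sq p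
    _ ≤ n.minFac * d := Nat.mul_le_mul (hmin _ (minFac_prime hn1) (minFac_dvd n)) hpd
    _ = n := hnd.symm

end Nat

section AddGroup

variable {G : Type*} [AddGroup G] [Finite G] {p : ℕ}

lemma AddSubgroup.mul_card_le_card_of_ne_top {H : AddSubgroup G} (hH : H ≠ ⊤)
    (hmin : ∀ q, q.Prime → q ∣ Nat.card G → p ≤ q) : p * Nat.card H ≤ Nat.card G := by
  rw [← H.card_mul_index, mul_comm]
  refine Nat.mul_le_mul_left _ (Nat.le_of_forall_prime_dvd_le ?_ H.index_ne_zero_of_finite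
    fun q hq hqi => hmin q hq (hqi.trans H.index_dvd_card))
  exact fun h => hH (AddSubgroup.index_eq_one.mp h)

lemma sq_le_card_of_not_isAddCyclic (hnc : ¬ IsAddCyclic G)
    (hmin : ∀ q, q.Prime → q ∣ Nat.card G → p ≤ q) : p ^ 2 ≤ Nat.card G := by
  refine Nat.sq_le_of_forall_prime_dvd_le ?_ Nat.card_pos.ne' ?_ hmin
  · intro h
    have : Subsingleton G := (Nat.card_eq_one_iff_unique.mp h).1
    exact hnc inferInstance
  · intro hprime
    have : Fact (Nat.card G).Prime := ⟨hprime⟩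
    exact hnc (isAddCyclic_of_prime_card rfl)

end AddGroup

lemma nonempty_linearEquiv_prod_of_card_eq_sq {K V : Type*} [Field K] [Finite K] [AddCommGroup V]
    [Module K V] [Finite V] (hcard : Nat.card V = Nat.card K ^ 2) : Nonempty (V ≃ₗ[K] K × K) := by
  have : Fintype K := Fintype.ofFinite K
  have : Fintype V := Fintype.ofFinite V
  refine FiniteDimensional.nonempty_linearEquiv_of_finrank_eq ?_
  have hpow := Module.card_eq_pow_finrank (K := K) (V := V)
  rw [Fintype.card_eq_nat_card, Fintype.card_eq_nat_card, hcard] at hpow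
  rw [Module.finrank_prod, Module.finrank_self]
  exact Nat.pow_right_injective Finite.one_lt_card hpow.symm

/-- A non-cyclic group of order `p²` has exponent `p`, so it is a vector space over `ZMod p`. -/
lemma nonempty_addEquiv_zmod_prod_of_card_eq_sq {G : Type*} [AddCommGroup G] [Finite G]
    {p : ℕ} [hp : Fact p.Prime] (hcard : Nat.card G = p ^ 2) (hnc : ¬ IsAddCyclic G) :
    Nonempty (G ≃+ ZMod p × ZMod p) := by
  have hsmul : ∀ x : G, p • x = 0 := by
    intro x
    rw [← addOrderOf_dvd_iff_nsmul_eq_zero]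
    obtain ⟨k, hk, hx⟩ := (Nat.dvd_prime_pow hp.out).mp (hcard ▸ addOrderOf_dvd_natCard x)
    interval_cases k
    · simp [hx]
    · simp [hx]
    · exact (hnc (isAddCyclic_of_addOrderOf_eq_card x (hx.trans hcard.symm))).elim
  let : Module (ZMod p) G := AddCommGroup.zmodModule hsmul
  exact ⟨(nonempty_linearEquiv_prod_of_card_eq_sq (by rwa [Nat.card_zmod])).some.toAddEquiv⟩

section Ring

variable {R : Type*} [NonUnitalRing R]

/-- The ring analogue of "`G / Z(G)` cyclic implies `G` abelian". -/
lemma mul_comm_of_isAddCyclic_quotient_zCenter (S : NonUnitalSubring R)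
    (hcyc : IsAddCyclic (S.toAddSubgroup ⧸ (zCenter S).addSubgroupOf S.toAddSubgroup))
    {s t : R} (hs : s ∈ S) (ht : t ∈ S) : s * t = t * s := by
  obtain ⟨g, hg⟩ := hcyc.exists_generator
  obtain ⟨x, rfl⟩ := QuotientAddGroup.mk'_surjective _ g
  have hrep : ∀ u ∈ S, ∃ w ∈ zCenter S, ∃ a : ℤ, u = w + a • (x : R) := by
    intro u hu
    obtain ⟨a, ha⟩ := AddSubgroup.mem_zmultiples_iff.mp (hg (QuotientAddGroup.mk' _ ⟨u, hu⟩))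
    rw [← map_zsmul, QuotientAddGroup.mk'_apply, QuotientAddGroup.mk'_apply,
      QuotientAddGroup.eq, AddSubgroup.mem_addSubgroupOf] at ha
    exact ⟨_, ha, a, by push_cast; abel⟩
  obtain ⟨w, hw, a, rfl⟩ := hrep s hs
  obtain ⟨v, hv, b, rfl⟩ := hrep t ht
  simp only [add_mul, mul_add, smul_mul_assoc, mul_smul_comm, smul_add, smul_smul, hw.2 v,
    hw.2 x, ← hv.2 x, mul_comm b a]
  abel

lemma card_centralizer_singleton_of_forall_mul_comm {s : R} (hs : ∀ r, s * r = r * s) :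
    Nat.card (NonUnitalSubring.centralizer {s}) = Nat.card R :=
  Nat.card_congr (Equiv.subtypeUnivEquiv fun r =>
    NonUnitalSubring.mem_centralizer_iff.mpr fun _ hg => (Set.mem_singleton_iff.mp hg) ▸ hs r)

variable [Finite R] {p : ℕ}

lemma card_commutingPairs_eq_sum (S : Set R) [Fintype S] :
    Nat.card {q : S × (Set.univ : Set R) // (q.1 : R) * q.2 = q.2 * q.1} =
      ∑ s : S, Nat.card (NonUnitalSubring.centralizer {(s : R)}) := by
  rw [Nat.card_congr (Equiv.subtypeProdEquivSigmaSubtype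
    fun (s : S) (r : (Set.univ : Set R)) => (s : R) * r = r * s), Nat.card_sigma]
  refine Finset.sum_congr rfl fun s _ => Nat.card_congr ?_
  exact Equiv.subtypeEquiv (Equiv.Set.univ R) fun r => by
    simp [NonUnitalSubring.mem_centralizer_iff]

lemma mul_card_centralizer_singleton_le {s : R} (hs : ¬ ∀ r, s * r = r * s)
    (hmin : ∀ q, q.Prime → q ∣ Nat.card R → p ≤ q) :
    p * Nat.card (NonUnitalSubring.centralizer {s}) ≤ Nat.card R := by
  refine AddSubgroup.mul_card_le_card_of_ne_top
    (H := (NonUnitalSubring.centralizer {s}).toAddSubgroup) (fun htop => hs fun r => ?_) hmin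
  have hr : r ∈ (NonUnitalSubring.centralizer {s}).toAddSubgroup := htop ▸ AddSubgroup.mem_top r
  exact NonUnitalSubring.mem_centralizer_iff.mp hr s rfl

omit [Finite R] in
open Classical in
lemma card_filter_mem_zCenter (S : NonUnitalSubring R) [Fintype (S : Set R)] :
    #{s : (S : Set R) | (s : R) ∈ zCenter S} = Nat.card (zCenter S) := by
  rw [← Fintype.card_subtype, ← Nat.card_eq_fintype_card]
  exact Nat.card_congr ((Equiv.subtypeSubtypeEquivSubtypeInter _ _).trans
    (Equiv.subtypeEquivRight fun _ => ⟨And.right, fun h => ⟨h.1, h⟩⟩))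

lemma mul_card_commutingPairs_le (S : NonUnitalSubring R) [Fintype (S : Set R)]
    (hmin : ∀ q, q.Prime → q ∣ Nat.card R → p ≤ q) :
    p * Nat.card {q : ↥(S : Set R) × ↥(Set.univ : Set R) // (q.1 : R) * q.2 = q.2 * q.1} ≤
      (Nat.card (S : Set R) + (p - 1) * Nat.card (zCenter S)) * Nat.card R := by
  classical
  rw [card_commutingPairs_eq_sum, Finset.mul_sum]
  calc ∑ s : (S : Set R), p * Nat.card (NonUnitalSubring.centralizer {(s : R)})
      ≤ ∑ s : (S : Set R),
          (Nat.card R + if (s : R) ∈ zCenter S then (p - 1) * Nat.card R else 0) := by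
        gcongr with s
        split_ifs with hs
        · rw [card_centralizer_singleton_of_forall_mul_comm hs.2, ← one_add_mul]
          exact Nat.mul_le_mul_right _ (by omega)
        · exact (mul_card_centralizer_singleton_le (fun h => hs ⟨s.2, h⟩) hmin).trans
            (Nat.le_add_right _ _)
    _ = _ := by
        rw [Finset.sum_add_distrib, Finset.sum_const, Finset.sum_ite, Finset.sum_const_zero,
          Finset.sum_const, Finset.card_univ, card_filter_mem_zCenter, smul_eq_mul, smul_eq_mul,
          add_zero, Fintype.card_eq_nat_card]
        ring

omit [Finite R] in
lemma card_eq_relIndex_zCenter_mul (S : NonUnitalSubring R) :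
    Nat.card (S : Set R) = (zCenter S).relIndex S.toAddSubgroup * Nat.card (zCenter S) := by
  have hle : zCenter S ≤ S.toAddSubgroup := fun _ hx => hx.1
  rw [mul_comm, ← AddSubgroup.relIndex_bot_left, AddSubgroup.relIndex_mul_relIndex _ _ _ bot_le hle,
    AddSubgroup.relIndex_bot_left]
  rfl

lemma relCommProb_le (S : NonUnitalSubring R) (hp : 0 < p)
    (hmin : ∀ q, q.Prime → q ∣ Nat.card R → p ≤ q) :
    relCommProb R S Set.univ ≤
      ((zCenter S).relIndex S.toAddSubgroup + p - 1) /
        (p * (zCenter S).relIndex S.toAddSubgroup) := by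
  have : Fintype (S : Set R) := Fintype.ofFinite _
  have hpairs := mul_card_commutingPairs_le S hmin
  have hS := card_eq_relIndex_zCenter_mul S
  set N := Nat.card {q : ↥(S : Set R) × ↥(Set.univ : Set R) // (q.1 : R) * q.2 = q.2 * q.1}
  set k := (zCenter S).relIndex S.toAddSubgroup
  set z := Nat.card (zCenter S)
  set m := Nat.card R
  have hk : 0 < k := Nat.pos_of_mul_pos_right (hS ▸ Nat.card_pos)
  have hz : 0 < z := Nat.card_pos
  have hm : 0 < m := Nat.card_pos
  have hpairsQ : (p : ℚ) * N ≤ (k * z + (p - 1) * z) * m := by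
    rw [hS] at hpairs
    have := (Nat.cast_le (α := ℚ)).mpr hpairs
    push_cast [Nat.cast_sub hp] at this
    exact this
  rw [relCommProb, Nat.card_univ, hS, div_le_div_iff₀ (by positivity) (by positivity)]
  push_cast
  calc (N : ℚ) * (p * k) = (p * N) * k := by ring
    _ ≤ ((k * z + (p - 1) * z) * m) * k := by gcongr
    _ = _ := by ring

lemma relIndex_zCenter_le_sq_of_relCommProb_eq (S : NonUnitalSubring R) (hp : 1 < p)
    (hmin : ∀ q, q.Prime → q ∣ Nat.card R → p ≤ q)
    (h : relCommProb R S Set.univ = ((p : ℚ) ^ 2 + p - 1) / p ^ 3) :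
    (zCenter S).relIndex S.toAddSubgroup ≤ p ^ 2 := by
  have hbound := relCommProb_le S (Nat.zero_lt_of_lt hp) hmin
  set k := (zCenter S).relIndex S.toAddSubgroup
  have hk : 0 < k := Nat.pos_of_mul_pos_right ((card_eq_relIndex_zCenter_mul S) ▸ Nat.card_pos)
  have hpQ : (1 : ℚ) < p := by exact_mod_cast hp
  have hkQ : (0 : ℚ) < k := by exact_mod_cast hk
  rw [h, div_le_div_iff₀ (by positivity) (by positivity)] at hbound
  have : ((p : ℚ) - 1) * k ≤ ((p : ℚ) - 1) * p ^ 2 := by nlinarith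
  exact_mod_cast le_of_mul_le_mul_left this (by linarith)

lemma dvd_card_of_relCommProb_eq (S : NonUnitalSubring R) (hp : p.Prime)
    (h : relCommProb R S Set.univ = ((p : ℚ) ^ 2 + p - 1) / p ^ 3) : p ∣ Nat.card R := by
  set N := Nat.card {q : ↥(S : Set R) × ↥(Set.univ : Set R) // (q.1 : R) * q.2 = q.2 * q.1}
  set n := Nat.card (S : Set R)
  set m := Nat.card R
  have hnm : n ∣ m := AddSubgroup.card_addSubgroup_dvd_card S.toAddSubgroup
  have h1 : 1 ≤ p ^ 2 + p := le_add_left hp.one_lt.le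
  have hN : N * p ^ 3 = (p ^ 2 + p - 1) * (n * m) := by
    have hp0 : (0 : ℚ) < p := by exact_mod_cast hp.pos
    have hn : (0 : ℚ) < n := by exact_mod_cast Nat.card_pos
    have hm : (0 : ℚ) < m := by exact_mod_cast Nat.card_pos
    rw [relCommProb, Nat.card_univ, div_eq_div_iff (by positivity) (by positivity)] at h
    have hQ : (N : ℚ) * p ^ 3 = ((p ^ 2 + p - 1 : ℕ) : ℚ) * (n * m) := by
      push_cast [Nat.cast_sub h1]
      exact h
    exact_mod_cast hQ
  have hcop : p.Coprime (p ^ 2 + p - 1) := by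
    refine (Nat.Prime.coprime_iff_not_dvd hp).2 fun hd => hp.one_lt.ne' (Nat.dvd_one.mp ?_)
    refine (Nat.dvd_add_right hd).mp ?_
    rw [Nat.sub_add_cancel h1]
    exact Dvd.intro (p + 1) (by ring)
  have hpnm : p ∣ n * m :=
    hcop.dvd_of_dvd_mul_left (hN ▸ dvd_mul_of_dvd_right (dvd_pow_self p three_ne_zero) N)
  rcases hp.dvd_mul.mp hpnm with hpn | hpm
  · exact hpn.trans hnm
  · exact hpm

end Ring

/-- If `S` is a non-commutative subring of a finite ring `R` with `Pr(S, R) = (p² + p − 1)/p³`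
for a prime `p`, then `p ∣ |R|`; moreover, if `p` is the smallest prime dividing `|R|`, then
the additive quotient group `S/Z(S, R)` is isomorphic to `ℤ_p × ℤ_p`. -/
theorem quotient_iso_of_relCommProb_eq' {R : Type*} [NonUnitalRing R] [Fintype R]
    (S : NonUnitalSubring R) (hncomm : ∃ s ∈ S, ∃ t ∈ S, s * t ≠ t * s)
    (p : ℕ) (hp : p.Prime)
    (h : relCommProb R (S : Set R) Set.univ = ((p : ℚ) ^ 2 + (p : ℚ) - 1) / (p : ℚ) ^ 3) :
    p ∣ Nat.card R ∧
    ((∀ q : ℕ, q.Prime → q ∣ Nat.card R → p ≤ q) →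
      Nonempty ((S.toAddSubgroup ⧸ (zCenter S).addSubgroupOf S.toAddSubgroup) ≃+
        (ZMod p × ZMod p))) := by
  refine ⟨dvd_card_of_relCommProb_eq S hp h, fun hmin => ?_⟩
  have : Fact p.Prime := ⟨hp⟩
  obtain ⟨s, hs, t, ht, hst⟩ := hncomm
  have hnc : ¬ IsAddCyclic (S.toAddSubgroup ⧸ (zCenter S).addSubgroupOf S.toAddSubgroup) :=
    fun hcyc => hst (mul_comm_of_isAddCyclic_quotient_zCenter S hcyc hs ht)
  have hdvd : (zCenter S).relIndex S.toAddSubgroup ∣ Nat.card R :=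
    (AddSubgroup.relIndex_dvd_card _ _).trans (AddSubgroup.card_addSubgroup_dvd_card _)
  have hcard : (zCenter S).relIndex S.toAddSubgroup = p ^ 2 :=
    le_antisymm (relIndex_zCenter_le_sq_of_relCommProb_eq S hp.one_lt hmin h)
      (sq_le_card_of_not_isAddCyclic hnc fun q hq hqd => hmin q hq (hqd.trans hdvd))
  exact nonempty_addEquiv_zmod_prod_of_card_eq_sq hcard hnc
end

section
/- Let R be a finite (not necessarily unital) non-commutative ring and let H and N be subrings of R such that N is a two-sided ideal of R and N ⊆ H. Then Pr(H, R) ≤ Pr(H/N, R/N) · Pr(N). Moreover, if N ∩ [H, R] = {0}, then equality holds. -/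
open scoped Pointwise

section Helpers
open Finset

lemma ncard_filter {α : Type*} [Fintype α] (p : α → Prop) [DecidablePred p] :
    Nat.card {x // p x} = (Finset.univ.filter p).card := by
  rw [← Nat.card_eq_finsetCard]
  exact Nat.card_congr (Equiv.subtypeEquivRight (by simp))

lemma fiber_card_eq' {G : Type*} [AddCommGroup G] [Fintype G] (s : Finset G)
    (hsub : ∀ a ∈ s, ∀ b ∈ s, a - b ∈ s) (hadd : ∀ a ∈ s, ∀ b ∈ s, a + b ∈ s)
    (φ : G → G) (hφs : ∀ a b, φ (a - b) = φ a - φ b) (hφa : ∀ a b, φ (a + b) = φ a + φ b)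
    {v m₀ : G} (hm₀ : m₀ ∈ s) (hv : φ m₀ = v)
    [DecidablePred fun x => φ x = v] [DecidablePred fun x => φ x = 0] :
    (s.filter fun x => φ x = v).card = (s.filter fun x => φ x = 0).card := by
  apply Finset.card_bij' (fun m _ => m - m₀) (fun m _ => m + m₀)
  · intro a ha
    simp only [mem_filter] at ha ⊢
    exact ⟨hsub _ ha.1 _ hm₀, by rw [hφs, ha.2, hv, sub_self]⟩
  · intro a ha
    simp only [mem_filter] at ha ⊢
    exact ⟨hadd _ ha.1 _ hm₀, by rw [hφa, ha.2, hv, zero_add]⟩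
  · intro a _; abel
  · intro a _; abel

lemma fiber_card_le' {G : Type*} [AddCommGroup G] [Fintype G] (s : Finset G)
    (hsub : ∀ a ∈ s, ∀ b ∈ s, a - b ∈ s) (hadd : ∀ a ∈ s, ∀ b ∈ s, a + b ∈ s)
    (φ : G → G) (hφs : ∀ a b, φ (a - b) = φ a - φ b) (hφa : ∀ a b, φ (a + b) = φ a + φ b)
    (v : G) [DecidablePred fun x => φ x = v] [DecidablePred fun x => φ x = 0] :
    (s.filter fun x => φ x = v).card ≤ (s.filter fun x => φ x = 0).card := by
  rcases (s.filter fun x => φ x = v).eq_empty_or_nonempty with h | ⟨m₀, hm₀⟩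
  · simp [h]
  · rw [mem_filter] at hm₀
    exact le_of_eq (fiber_card_eq' s hsub hadd φ hφs hφa hm₀.1 hm₀.2)

lemma const_fiber_card {α β : Type*} (f : α → β) (s : Finset α) (k : ℕ) [DecidableEq β]
    (hfib : ∀ y ∈ s.image f, (s.filter fun x => f x = y).card = k) :
    s.card = (s.image f).card * k := by
  rw [Finset.card_eq_sum_card_image f s, Finset.sum_congr rfl hfib, Finset.sum_const, smul_eq_mul]

lemma pair_count_sum {α : Type*} [Fintype α] (p : α → Prop) (q : α → α → Prop)
    [DecidablePred p] [∀ a, DecidablePred (q a)] [DecidablePred fun z : α × α => p z.1 ∧ q z.1 z.2] :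
    Nat.card {z : α × α // p z.1 ∧ q z.1 z.2} =
      ∑ a ∈ Finset.univ.filter p, (Finset.univ.filter (q a)).card := by
  rw [ncard_filter, Finset.card_filter, ← Finset.univ_product_univ, Finset.sum_product]
  rw [Finset.sum_filter]
  refine Finset.sum_congr rfl fun a _ => ?_
  by_cases hp : p a
  · rw [if_pos hp, Finset.card_filter]
    exact Finset.sum_congr rfl fun b _ => by simp only [hp, true_and]
  · rw [if_neg hp]
    exact Finset.sum_eq_zero fun b _ => by simp only [hp, false_and, if_false]

lemma count_ineq {R : Type*} [NonUnitalRing R] [Fintype R] (H : NonUnitalSubring R)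
    (N : TwoSidedIdeal R) (hNH : (N : Set R) ⊆ (H : Set R)) :
    Nat.card {q : R × R // q.1 ∈ H ∧ q.1 * q.2 = q.2 * q.1} *
        (Nat.card {x : R // x ∈ N} * Nat.card {x : R // x ∈ N}) ≤
      Nat.card {q : R × R // q.1 ∈ H ∧ q.1 * q.2 - q.2 * q.1 ∈ N} *
        Nat.card {q : R × R // q.1 ∈ N ∧ q.2 ∈ N ∧ q.1 * q.2 = q.2 * q.1} := by
  classical
  set FN : Finset R := Finset.univ.filter fun x => x ∈ N with hFN
  set FH : Finset R := Finset.univ.filter fun x => x ∈ H with hFH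
  have hmemFN : ∀ x : R, x ∈ FN ↔ x ∈ N := by intro x; simp [hFN]
  have hmemFH : ∀ x : R, x ∈ FH ↔ x ∈ H := by intro x; simp [hFH]
  have hNsub : ∀ a ∈ FN, ∀ b ∈ FN, a - b ∈ FN := by
    intro a ha b hb; rw [hmemFN] at *; exact sub_mem ha hb
  have hNadd : ∀ a ∈ FN, ∀ b ∈ FN, a + b ∈ FN := by
    intro a ha b hb; rw [hmemFN] at *; exact add_mem ha hb
  -- abbreviations
  set c : R → ℕ := fun h => (Finset.univ.filter fun r => h * r = r * h).card with hc
  set d : R → ℕ := fun h => (Finset.univ.filter fun r => h * r - r * h ∈ N).card with hd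
  set e : R → ℕ := fun h => (FN.filter fun m => h * m = m * h).card with he
  set P : ℕ := ∑ n ∈ FN, e n with hP
  -- identify the three Nat.cards with sums
  have hT : Nat.card {q : R × R // q.1 ∈ H ∧ q.1 * q.2 = q.2 * q.1} = ∑ h ∈ FH, c h := by
    simp only [hFH, hc]
    exact pair_count_sum (fun x => x ∈ H) (fun a b => a * b = b * a)
  have hT' : Nat.card {q : R × R // q.1 ∈ H ∧ q.1 * q.2 - q.2 * q.1 ∈ N} = ∑ h ∈ FH, d h := by
    simp only [hFH, hd]
    exact pair_count_sum (fun x => x ∈ H) (fun a b => a * b - b * a ∈ N)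
  have hPc : Nat.card {q : R × R // q.1 ∈ N ∧ q.2 ∈ N ∧ q.1 * q.2 = q.2 * q.1} = P := by
    rw [hP]
    simp only [hFN, he]
    rw [pair_count_sum (fun x => x ∈ N) (fun n m => m ∈ N ∧ n * m = m * n)]
    refine Finset.sum_congr rfl fun n _ => ?_
    rw [Finset.filter_filter]
  have hk : Nat.card {x : R // x ∈ N} = FN.card := ncard_filter _
  -- Step A
  have stepA : ∀ h : R, c h * FN.card ≤ d h * e h := by
    intro h
    set φ : R → R := fun r => h * r - r * h with hφ
    have hφs : ∀ a b : R, φ (a - b) = φ a - φ b := by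
      intro a b; simp only [hφ, mul_sub, sub_mul]; abel
    have hφa : ∀ a b : R, φ (a + b) = φ a + φ b := by
      intro a b; simp only [hφ, mul_add, add_mul]; abel
    have hφN : ∀ m ∈ FN, φ m ∈ FN := by
      intro m hm
      rw [hmemFN] at *
      exact sub_mem (N.mul_mem_left _ _ hm) (N.mul_mem_right _ _ hm)
    set I : Finset R := FN.image φ with hI
    -- kernel filters agree with comm filters
    have hker : (FN.filter fun m => φ m = 0) = FN.filter fun m => h * m = m * h := by
      apply Finset.filter_congr; intro m _; simp [hφ, sub_eq_zero]
    have hkerU : (Finset.univ.filter fun r => φ r = 0) = Finset.univ.filter fun r => h * r = r * h := by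
      apply Finset.filter_congr; intro m _; simp [hφ, sub_eq_zero]
    -- (1a) : FN.card = I.card * e h
    have h1a : FN.card = I.card * e h := by
      simp only [he, hI]
      rw [← hker]
      refine const_fiber_card φ FN _ fun v hv => ?_
      obtain ⟨m₀, hm₀, hvm⟩ := Finset.mem_image.mp hv
      exact fiber_card_eq' FN hNsub hNadd φ hφs hφa hm₀ hvm
    -- (1b) : I.card * c h ≤ d h
    have h1b : I.card * c h ≤ d h := by
      have hdisj : ∀ v₁ ∈ I, ∀ v₂ ∈ I, v₁ ≠ v₂ →
          Disjoint (Finset.univ.filter fun r => φ r = v₁) (Finset.univ.filter fun r => φ r = v₂) := by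
        intro v₁ _ v₂ _ hne
        refine Finset.disjoint_left.mpr fun r hr₁ hr₂ => ?_
        rw [Finset.mem_filter] at hr₁ hr₂
        exact hne (hr₁.2 ▸ hr₂.2 ▸ rfl)
      have hsubU : (I.biUnion fun v => Finset.univ.filter fun r => φ r = v) ⊆
          Finset.univ.filter fun r => φ r - 0 ∈ N := by
        intro r hr
        obtain ⟨v, hv, hrv⟩ := Finset.mem_biUnion.mp hr
        rw [Finset.mem_filter] at hrv ⊢
        obtain ⟨m₀, hm₀, hvm⟩ := Finset.mem_image.mp (hI ▸ hv)
        refine ⟨Finset.mem_univ _, ?_⟩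
        rw [sub_zero, hrv.2, ← hvm]
        exact (hmemFN _).mp (hφN m₀ hm₀)
      calc I.card * c h = ∑ v ∈ I, c h := by rw [Finset.sum_const, smul_eq_mul]
        _ = ∑ v ∈ I, (Finset.univ.filter fun r => φ r = v).card := by
            refine Finset.sum_congr rfl fun v hv => ?_
            obtain ⟨m₀, hm₀, hvm⟩ := Finset.mem_image.mp (hI ▸ hv)
            show (Finset.univ.filter fun r => h * r = r * h).card = _
            rw [← hkerU]
            exact (fiber_card_eq' Finset.univ (by simp) (by simp) φ hφs hφa (Finset.mem_univ m₀) hvm).symm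
        _ = (I.biUnion fun v => Finset.univ.filter fun r => φ r = v).card :=
            (Finset.card_biUnion hdisj).symm
        _ ≤ (Finset.univ.filter fun r => φ r - 0 ∈ N).card := Finset.card_le_card hsubU
        _ = d h := by rw [hd]; congr 1; apply Finset.filter_congr; intro r _; rw [hφ, sub_zero]
    calc c h * FN.card = c h * (I.card * e h) := by rw [h1a]
      _ = (I.card * c h) * e h := by ring
      _ ≤ d h * e h := Nat.mul_le_mul_right _ h1b
  -- Step B
  have stepB : ∀ h : R, ∑ n ∈ FN, e (h + n) ≤ P := by
    intro h
    have lhs_eq : ∑ n ∈ FN, e (h + n) =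
        ∑ m ∈ FN, (FN.filter fun n => (h + n) * m = m * (h + n)).card := by
      simp only [he, Finset.card_filter]
      exact Finset.sum_comm
    have rhs_eq : P = ∑ m ∈ FN, (FN.filter fun n => n * m = m * n).card := by
      simp only [hP, he, Finset.card_filter]
      exact Finset.sum_comm
    rw [lhs_eq, rhs_eq]
    refine Finset.sum_le_sum fun m _ => ?_
    set ψ : R → R := fun n => n * m - m * n with hψ
    have hψs : ∀ a b : R, ψ (a - b) = ψ a - ψ b := by
      intro a b; simp only [hψ, mul_sub, sub_mul]; abel
    have hψa : ∀ a b : R, ψ (a + b) = ψ a + ψ b := by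
      intro a b; simp only [hψ, mul_add, add_mul]; abel
    have hcond : (FN.filter fun n => (h + n) * m = m * (h + n)) =
        FN.filter fun n => ψ n = -(h * m - m * h) := by
      apply Finset.filter_congr; intro n _
      simp only [hψ, add_mul, mul_add]
      constructor
      · intro hyp
        have : h * m + n * m - (m * h + m * n) = 0 := by rw [hyp]; abel
        rw [eq_comm, neg_eq_iff_add_eq_zero]; rw [← this]; abel_nf
      · intro hyp
        have : n * m - m * n + (h * m - m * h) = 0 := by
          rw [hyp]; abel
        have h2 : h * m + n * m - (m * h + m * n) = 0 := by rw [← this]; abel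
        have := sub_eq_zero.mp h2
        linear_combination (norm := abel) this
    have hker : (FN.filter fun n => ψ n = 0) = FN.filter fun n => n * m = m * n := by
      apply Finset.filter_congr; intro n _; simp [hψ, sub_eq_zero]
    rw [hcond, ← hker]
    exact fiber_card_le' FN hNsub hNadd ψ hψs hψa _
  -- d is invariant under translation by N
  have dinv : ∀ n ∈ FN, ∀ h : R, d (h + n) = d h := by
    intro n hn h
    simp only [hd]
    refine congrArg Finset.card (Finset.filter_congr fun r _ => ?_)
    have hrw : (h + n) * r - r * (h + n) = (h * r - r * h) + (n * r - r * n) := by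
      simp only [add_mul, mul_add]; abel
    rw [hrw]
    have hnr : n * r - r * n ∈ N :=
      sub_mem (N.mul_mem_right _ _ ((hmemFN n).mp hn)) (N.mul_mem_left _ _ ((hmemFN n).mp hn))
    constructor
    · intro hyp; have := sub_mem hyp hnr; simpa using this
    · intro hyp; exact add_mem hyp hnr
  -- reindexing sums over FH by translation
  have reindex : ∀ n ∈ FN, ∀ f : R → ℕ, ∑ h ∈ FH, f h = ∑ h ∈ FH, f (h + n) := by
    intro n hn f
    have hnH : n ∈ H := hNH ((hmemFN n).mp hn)
    refine Finset.sum_bij' (fun a _ => a - n) (fun a _ => a + n) ?_ ?_ ?_ ?_ ?_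
    · intro a ha; rw [hmemFH] at *; exact sub_mem ha hnH
    · intro a ha; rw [hmemFH] at *; exact add_mem ha hnH
    · intro a _; rw [sub_add_cancel]
    · intro a _; rw [add_sub_cancel_right]
    · intro a _; rw [sub_add_cancel]
  -- main chain
  set U : ℕ := ∑ h ∈ FH, d h * e h with hU
  have chain1 : (∑ h ∈ FH, c h) * FN.card ≤ U := by
    rw [Finset.sum_mul]
    exact Finset.sum_le_sum fun h _ => stepA h
  have chain2 : U * FN.card ≤ (∑ h ∈ FH, d h) * P := by
    have hUk : U * FN.card = ∑ h ∈ FH, d h * ∑ n ∈ FN, e (h + n) := by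
      calc U * FN.card = ∑ n ∈ FN, U := by rw [Finset.sum_const, smul_eq_mul, mul_comm]
        _ = ∑ n ∈ FN, ∑ h ∈ FH, d (h + n) * e (h + n) := by
            refine Finset.sum_congr rfl fun n hn => ?_
            rw [hU]; exact reindex n hn _
        _ = ∑ h ∈ FH, ∑ n ∈ FN, d (h + n) * e (h + n) := Finset.sum_comm
        _ = ∑ h ∈ FH, ∑ n ∈ FN, d h * e (h + n) := by
            refine Finset.sum_congr rfl fun h _ => Finset.sum_congr rfl fun n hn => ?_
            rw [dinv n hn h]
        _ = ∑ h ∈ FH, d h * ∑ n ∈ FN, e (h + n) := by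
            refine Finset.sum_congr rfl fun h _ => ?_
            rw [Finset.mul_sum]
    rw [hUk, Finset.sum_mul]
    exact Finset.sum_le_sum fun h _ => Nat.mul_le_mul_left _ (stepB h)
  rw [hT, hT', hPc, hk, ← mul_assoc]
  calc (∑ h ∈ FH, c h) * FN.card * FN.card ≤ U * FN.card :=
        Nat.mul_le_mul_right _ chain1
    _ ≤ (∑ h ∈ FH, d h) * P := chain2

section QuotCount

variable {R : Type*} [NonUnitalRing R] [Fintype R]

lemma coe_eq_iffN (N : TwoSidedIdeal R) (a b : R) :
    (a : N.ringCon.Quotient) = (b : N.ringCon.Quotient) ↔ a - b ∈ N := by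
  rw [RingCon.eq, TwoSidedIdeal.rel_iff]

lemma quot_comm_iffN (N : TwoSidedIdeal R) (a b : R) :
    (a : N.ringCon.Quotient) * (b : N.ringCon.Quotient) =
      (b : N.ringCon.Quotient) * (a : N.ringCon.Quotient) ↔ a * b - b * a ∈ N := by
  rw [← RingCon.coe_mul, ← RingCon.coe_mul, coe_eq_iffN]

lemma quot_card_H (H : NonUnitalSubring R) (N : TwoSidedIdeal R)
    (hNH : (N : Set R) ⊆ (H : Set R)) :
    Nat.card {x : R // x ∈ H} =
      Nat.card {y : N.ringCon.Quotient //
          y ∈ (fun r : R => (r : N.ringCon.Quotient)) '' (H : Set R)} *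
        Nat.card {x : R // x ∈ N} := by
  classical
  haveI : Fintype N.ringCon.Quotient := Quotient.fintype _
  set π : R → N.ringCon.Quotient := fun r => (r : N.ringCon.Quotient) with hπ
  rw [ncard_filter (fun x : R => x ∈ H), ncard_filter, ncard_filter]
  have himg : (Finset.univ.filter fun y => y ∈ π '' (H : Set R)) =
      (Finset.univ.filter fun x : R => x ∈ H).image π := by
    ext y
    simp [Set.mem_image, SetLike.mem_coe]
  rw [himg]
  refine const_fiber_card π _ _ fun y hy => ?_
  obtain ⟨h₀, hh₀, rfl⟩ := Finset.mem_image.mp hy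
  rw [Finset.mem_filter] at hh₀
  refine Finset.card_bij' (fun a _ => a - h₀) (fun a _ => a + h₀) ?_ ?_ ?_ ?_
  · intro a ha
    simp only [Finset.mem_filter] at ha ⊢
    exact ⟨Finset.mem_univ _, (coe_eq_iffN N a h₀).mp ha.2⟩
  · intro a ha
    simp only [Finset.mem_filter] at ha ⊢
    refine ⟨⟨Finset.mem_univ _, add_mem (hNH ha.2) hh₀.2⟩, ?_⟩
    rw [hπ]
    rw [coe_eq_iffN N, add_sub_cancel_right]
    exact ha.2
  · intro a _; rw [sub_add_cancel]
  · intro a _; rw [add_sub_cancel_right]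

lemma quot_card_R (N : TwoSidedIdeal R) :
    Nat.card R = Nat.card N.ringCon.Quotient * Nat.card {x : R // x ∈ N} := by
  classical
  haveI : Fintype N.ringCon.Quotient := Quotient.fintype _
  set π : R → N.ringCon.Quotient := fun r => (r : N.ringCon.Quotient) with hπ
  have hsurj : Function.Surjective π := Quotient.mk''_surjective
  rw [Nat.card_eq_fintype_card, Nat.card_eq_fintype_card, ncard_filter,
    ← Finset.card_univ, ← Finset.card_univ (α := N.ringCon.Quotient),
    ← Finset.image_univ_of_surjective hsurj]
  refine const_fiber_card π _ _ fun y hy => ?_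
  obtain ⟨r₀, _, rfl⟩ := Finset.mem_image.mp hy
  refine Finset.card_bij' (fun a _ => a - r₀) (fun a _ => a + r₀) ?_ ?_ ?_ ?_
  · intro a ha
    simp only [Finset.mem_filter] at ha ⊢
    exact ⟨Finset.mem_univ _, (coe_eq_iffN N a r₀).mp ha.2⟩
  · intro a ha
    simp only [Finset.mem_filter] at ha ⊢
    refine ⟨Finset.mem_univ _, ?_⟩
    rw [hπ]
    rw [coe_eq_iffN N, add_sub_cancel_right]
    exact ha.2
  · intro a _; rw [sub_add_cancel]
  · intro a _; rw [add_sub_cancel_right]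

lemma quot_card_pair (H : NonUnitalSubring R) (N : TwoSidedIdeal R)
    (hNH : (N : Set R) ⊆ (H : Set R)) :
    Nat.card {q : R × R // q.1 ∈ H ∧ q.1 * q.2 - q.2 * q.1 ∈ N} =
      Nat.card {p : N.ringCon.Quotient × N.ringCon.Quotient //
          p.1 ∈ (fun r : R => (r : N.ringCon.Quotient)) '' (H : Set R) ∧
            p.1 * p.2 = p.2 * p.1} *
        (Nat.card {x : R // x ∈ N} * Nat.card {x : R // x ∈ N}) := by
  classical
  haveI : Fintype N.ringCon.Quotient := Quotient.fintype _
  set π : R → N.ringCon.Quotient := fun r => (r : N.ringCon.Quotient) with hπ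
  have hsurj : Function.Surjective π := Quotient.mk''_surjective
  set f : R × R → N.ringCon.Quotient × N.ringCon.Quotient := fun q => (π q.1, π q.2) with hf
  rw [ncard_filter, ncard_filter, ncard_filter (fun x : R => x ∈ N)]
  have himg : (Finset.univ.filter fun p : N.ringCon.Quotient × N.ringCon.Quotient =>
      p.1 ∈ π '' (H : Set R) ∧ p.1 * p.2 = p.2 * p.1) =
      (Finset.univ.filter fun q : R × R => q.1 ∈ H ∧ q.1 * q.2 - q.2 * q.1 ∈ N).image f := by
    ext p
    simp only [Finset.mem_filter, Finset.mem_univ, true_and, Finset.mem_image]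
    constructor
    · rintro ⟨⟨h, hh, hph⟩, hcomm⟩
      obtain ⟨r, hpr⟩ := hsurj p.2
      refine ⟨(h, r), ⟨hh, ?_⟩, ?_⟩
      · rw [← quot_comm_iffN N]
        show π h * π r = π r * π h
        rw [hph, hpr]
        exact hcomm
      · rw [hf]
        show (π h, π r) = p
        rw [hph, hpr]
    · rintro ⟨⟨h, r⟩, ⟨hh, hN⟩, rfl⟩
      refine ⟨⟨h, hh, rfl⟩, ?_⟩
      show π h * π r = π r * π h
      exact (quot_comm_iffN N h r).mpr hN
  rw [himg]
  refine const_fiber_card f _ _ fun y hy => ?_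
  obtain ⟨⟨h₀, r₀⟩, hq₀, rfl⟩ := Finset.mem_image.mp hy
  rw [Finset.mem_filter] at hq₀
  obtain ⟨_, hh₀, hN₀⟩ := hq₀
  rw [← Finset.card_product]
  refine Finset.card_bij' (fun a _ => (a.1 - h₀, a.2 - r₀)) (fun a _ => (a.1 + h₀, a.2 + r₀))
    ?_ ?_ ?_ ?_
  · rintro ⟨a, b⟩ ha
    simp only [Finset.mem_filter, Finset.mem_univ, true_and, Finset.mem_product, hf,
      Prod.mk.injEq] at ha ⊢
    exact ⟨(coe_eq_iffN N a h₀).mp ha.2.1, (coe_eq_iffN N b r₀).mp ha.2.2⟩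
  · rintro ⟨n, m⟩ hnm
    simp only [Finset.mem_product, Finset.mem_filter, Finset.mem_univ, true_and, hf,
      Prod.mk.injEq] at hnm ⊢
    obtain ⟨hn, hm⟩ := hnm
    have hmemH : n + h₀ ∈ H := add_mem (hNH hn) hh₀
    have hcomm : (n + h₀) * (m + r₀) - (m + r₀) * (n + h₀) ∈ N := by
      have hrw : (n + h₀) * (m + r₀) - (m + r₀) * (n + h₀) =
          (h₀ * r₀ - r₀ * h₀) + ((n * m - m * n) + ((n * r₀ - r₀ * n) + (h₀ * m - m * h₀))) := by
        simp only [add_mul, mul_add]; abel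
      rw [hrw]
      refine add_mem hN₀ (add_mem ?_ (add_mem ?_ ?_))
      · exact sub_mem (N.mul_mem_right _ _ hn) (N.mul_mem_left _ _ hn)
      · exact sub_mem (N.mul_mem_right _ _ hn) (N.mul_mem_left _ _ hn)
      · exact sub_mem (N.mul_mem_left _ _ hm) (N.mul_mem_right _ _ hm)
    refine ⟨⟨hmemH, hcomm⟩, ?_, ?_⟩
    · show π (n + h₀) = π h₀
      rw [hπ]; rw [coe_eq_iffN N, add_sub_cancel_right]; exact hn
    · show π (m + r₀) = π r₀
      rw [hπ]; rw [coe_eq_iffN N, add_sub_cancel_right]; exact hm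
  · rintro ⟨a, b⟩ _; dsimp only; rw [sub_add_cancel, sub_add_cancel]
  · rintro ⟨a, b⟩ _; dsimp only; rw [add_sub_cancel_right, add_sub_cancel_right]

end QuotCount
end Helpers

/-- For subrings `N ⊆ H` of a finite non-commutative ring `R` with `N` a two-sided ideal of
`R`: `Pr(H, R) ≤ Pr(H/N, R/N) · Pr(N)`, with equality when `N ∩ [H, R] = {0}`. -/
theorem relCommProb_le_quotient_mul {R : Type*} [NonUnitalRing R] [Fintype R]
    (hnc : ∃ a b : R, a * b ≠ b * a) (H : NonUnitalSubring R) (N : TwoSidedIdeal R)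
    (hNH : (N : Set R) ⊆ (H : Set R)) :
    relCommProb R (H : Set R) Set.univ ≤
      relCommProb N.ringCon.Quotient
          ((fun r : R => (r : N.ringCon.Quotient)) '' (H : Set R)) Set.univ *
        relCommProb R (N : Set R) (N : Set R) ∧
    ((N : Set R) ∩ ((commSub H : AddSubgroup R) : Set R) = {0} →
      relCommProb R (H : Set R) Set.univ =
        relCommProb N.ringCon.Quotient
            ((fun r : R => (r : N.ringCon.Quotient)) '' (H : Set R)) Set.univ *
          relCommProb R (N : Set R) (N : Set R)) := by
  classical
  set π : R → N.ringCon.Quotient := fun r => (r : N.ringCon.Quotient) with hπ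
  set T : ℕ := Nat.card {q : R × R // q.1 ∈ H ∧ q.1 * q.2 = q.2 * q.1} with hT
  set T' : ℕ := Nat.card {q : R × R // q.1 ∈ H ∧ q.1 * q.2 - q.2 * q.1 ∈ N} with hT'
  set P : ℕ := Nat.card {q : R × R // q.1 ∈ N ∧ q.2 ∈ N ∧ q.1 * q.2 = q.2 * q.1} with hPdef
  set Qn : ℕ := Nat.card {p : N.ringCon.Quotient × N.ringCon.Quotient //
      p.1 ∈ π '' (H : Set R) ∧ p.1 * p.2 = p.2 * p.1} with hQndef
  set kN : ℕ := Nat.card {x : R // x ∈ N} with hkN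
  set nH : ℕ := Nat.card {x : R // x ∈ H} with hnH
  set nH' : ℕ := Nat.card {y : N.ringCon.Quotient // y ∈ π '' (H : Set R)} with hnH'
  set nR' : ℕ := Nat.card N.ringCon.Quotient with hnR'
  -- rewriting the three probabilities as explicit fractions
  have eH : relCommProb R (H : Set R) Set.univ = (T : ℚ) / ((nH : ℚ) * (Nat.card R : ℚ)) := by
    unfold relCommProb
    have h1 : Nat.card {p : ↥(H : Set R) × ↥(Set.univ : Set R) //
        (p.1 : R) * (p.2 : R) = (p.2 : R) * (p.1 : R)} = T :=
      Nat.card_congr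
        { toFun := fun x => ⟨(x.1.1.1, x.1.2.1), x.1.1.2, x.2⟩
          invFun := fun q => ⟨(⟨q.1.1, q.2.1⟩, ⟨q.1.2, Set.mem_univ _⟩), q.2.2⟩
          left_inv := fun x => rfl
          right_inv := fun q => rfl }
    have h2 : Nat.card ↥(H : Set R) = nH :=
      Nat.card_congr (Equiv.subtypeEquivRight fun x => by simp)
    have h3 : Nat.card ↥(Set.univ : Set R) = Nat.card R := Nat.card_congr (Equiv.Set.univ R)
    rw [h1, h2, h3]
  have eN : relCommProb R (N : Set R) (N : Set R) = (P : ℚ) / ((kN : ℚ) * (kN : ℚ)) := by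
    unfold relCommProb
    have h1 : Nat.card {p : ↥(N : Set R) × ↥(N : Set R) //
        (p.1 : R) * (p.2 : R) = (p.2 : R) * (p.1 : R)} = P :=
      Nat.card_congr
        { toFun := fun x => ⟨(x.1.1.1, x.1.2.1), x.1.1.2, x.1.2.2, x.2⟩
          invFun := fun q => ⟨(⟨q.1.1, q.2.1⟩, ⟨q.1.2, q.2.2.1⟩), q.2.2.2⟩
          left_inv := fun x => rfl
          right_inv := fun q => rfl }
    have h2 : Nat.card ↥(N : Set R) = kN :=
      Nat.card_congr (Equiv.subtypeEquivRight fun x => by simp)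
    rw [h1, h2]
  have eQ : relCommProb N.ringCon.Quotient (π '' (H : Set R)) Set.univ =
      (Qn : ℚ) / ((nH' : ℚ) * (nR' : ℚ)) := by
    unfold relCommProb
    have h1 : Nat.card {p : ↥(π '' (H : Set R)) × ↥(Set.univ : Set N.ringCon.Quotient) //
        (p.1 : N.ringCon.Quotient) * (p.2 : N.ringCon.Quotient) =
          (p.2 : N.ringCon.Quotient) * (p.1 : N.ringCon.Quotient)} = Qn :=
      Nat.card_congr
        { toFun := fun x => ⟨(x.1.1.1, x.1.2.1), x.1.1.2, x.2⟩
          invFun := fun q => ⟨(⟨q.1.1, q.2.1⟩, ⟨q.1.2, Set.mem_univ _⟩), q.2.2⟩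
          left_inv := fun x => rfl
          right_inv := fun q => rfl }
    have h2 : Nat.card ↥(π '' (H : Set R)) = nH' :=
      Nat.card_congr (Equiv.subtypeEquivRight fun x => by simp)
    have h3 : Nat.card ↥(Set.univ : Set N.ringCon.Quotient) = nR' :=
      Nat.card_congr (Equiv.Set.univ _)
    rw [h1, h2, h3]
  -- counting facts
  have f1 : nH = nH' * kN := quot_card_H H N hNH
  have f2 : Nat.card R = nR' * kN := quot_card_R N
  have f3 : T' = Qn * (kN * kN) := quot_card_pair H N hNH
  have f4 : T * (kN * kN) ≤ T' * P := count_ineq H N hNH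
  -- positivity
  haveI : Nonempty {x : R // x ∈ N} := ⟨⟨0, zero_mem _⟩⟩
  have kpos : 0 < kN := hkN ▸ Nat.card_pos
  haveI : Nonempty {x : R // x ∈ H} := ⟨⟨0, zero_mem _⟩⟩
  have nHpos : 0 < nH := hnH ▸ Nat.card_pos
  have nRpos : 0 < Nat.card R := Nat.card_pos
  have hDpos : (0 : ℚ) < (nH : ℚ) * (Nat.card R : ℚ) := by
    have := Nat.mul_pos nHpos nRpos
    exact_mod_cast this
  have hden : ((nH' : ℚ) * (nR' : ℚ)) * ((kN : ℚ) * (kN : ℚ)) =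
      (nH : ℚ) * (Nat.card R : ℚ) := by
    rw [f1, f2]; push_cast; ring
  constructor
  · -- the inequality
    have hle : T ≤ Qn * P := by
      have h5 : T * (kN * kN) ≤ (Qn * P) * (kN * kN) := by
        calc T * (kN * kN) ≤ T' * P := f4
          _ = (Qn * P) * (kN * kN) := by rw [f3]; ring
      exact Nat.le_of_mul_le_mul_right h5 (Nat.mul_pos kpos kpos)
    rw [eH, eQ, eN, div_mul_div_comm, hden]
    have hle' : (T : ℚ) ≤ (Qn : ℚ) * (P : ℚ) := by exact_mod_cast hle
    gcongr
  · -- the equality case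
    intro hzero
    have key : ∀ x : R, x ∈ N → x ∈ commSub H → x = 0 := by
      intro x hx hc
      have hmem : x ∈ (N : Set R) ∩ ((commSub H : AddSubgroup R) : Set R) := ⟨hx, hc⟩
      rw [hzero] at hmem
      simpa using hmem
    have gen : ∀ h : R, h ∈ H → ∀ r : R, h * r - r * h ∈ commSub H := fun h hh r =>
      AddSubgroup.subset_closure ⟨h, hh, r, rfl⟩
    have hT'T : T' = T := by
      rw [hT', hT]
      refine Nat.card_congr (Equiv.subtypeEquivRight fun q => ⟨fun hq => ⟨hq.1, ?_⟩,
        fun hq => ⟨hq.1, ?_⟩⟩)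
      · have h0 := key _ hq.2 (gen _ hq.1 _)
        rwa [sub_eq_zero] at h0
      · rw [hq.2, sub_self]; exact zero_mem _
    have hPkk : P = kN * kN := by
      rw [hPdef, hkN, ← Nat.card_prod]
      exact Nat.card_congr
        { toFun := fun q => (⟨q.1.1, q.2.1⟩, ⟨q.1.2, q.2.2.1⟩)
          invFun := fun p => ⟨(p.1.1, p.2.1), p.1.2, p.2.2, by
            have hN' : (p.1.1 : R) * p.2.1 - (p.2.1 : R) * p.1.1 ∈ N :=
              sub_mem (N.mul_mem_right _ _ p.1.2) (N.mul_mem_left _ _ p.1.2)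
            exact sub_eq_zero.mp (key _ hN' (gen _ (hNH p.1.2) _))⟩
          left_inv := fun q => rfl
          right_inv := fun p => rfl }
    have hTQ : T = Qn * P := by rw [hPkk, ← f3, hT'T]
    rw [eH, eQ, eN, div_mul_div_comm, hden, hTQ]
    push_cast
    ring
end

section
/- Let R be a finite (not necessarily unital) non-commutative ring and let N be a two-sided ideal of R. Then Pr(R) ≤ Pr(R/N) · Pr(N). Moreover, if N ∩ [R, R] = {0}, then equality holds. -/
open scoped Pointwise

open Finset

private lemma natCard_sigma {β : Type*} [Fintype β] (f : β → Type*) [∀ b, Finite (f b)] :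
    Nat.card (Σ b, f b) = ∑ b, Nat.card (f b) := by
  classical
  letI : ∀ b, Fintype (f b) := fun b => Fintype.ofFinite _
  simp [Nat.card_eq_fintype_card]

private lemma card_eq_sum_fibers {α β : Type*} [Finite α] [Fintype β] (f : α → β) :
    Nat.card α = ∑ b, Nat.card {a // f a = b} := by
  rw [← natCard_sigma]
  exact (Nat.card_congr (Equiv.sigmaFiberEquiv f)).symm

private lemma sum_fiberwise' {α β : Type*} [Fintype α] [Fintype β] [DecidableEq β] (g : α → β) (f : α → ℕ) :
    ∑ a, f a = ∑ b, ∑ a : {a // g a = b}, f a.1 := by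
  rw [← Finset.sum_sigma univ (fun b => (univ : Finset {a // g a = b})) (fun p => f p.2.1)]
  exact (Fintype.sum_equiv (Equiv.sigmaFiberEquiv g) _ _ (fun p => rfl)).symm

private lemma card_pairs {α β : Type*} [Finite α] [Finite β] [Fintype α] (P : α → β → Prop) :
    Nat.card {p : α × β // P p.1 p.2} = ∑ a, Nat.card {b // P a b} := by
  rw [Nat.card_congr (Equiv.subtypeProdEquivSigmaSubtype P), natCard_sigma]

section Main

variable {R : Type*} [NonUnitalRing R] [Fintype R] (N : TwoSidedIdeal R)

private lemma pi_eq_iff (x y : R) : (x : N.ringCon.Quotient) = y ↔ x - y ∈ N := by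
  rw [N.ringCon.eq, TwoSidedIdeal.rel_iff]

private lemma pi_surj : Function.Surjective (fun x : R => (x : N.ringCon.Quotient)) :=
  fun q => Quot.exists_rep q

private instance : Finite N.ringCon.Quotient := Finite.of_surjective _ (pi_surj N)

/-- fibers of the quotient map are in bijection with N -/
private noncomputable def fiberEquiv (q : N.ringCon.Quotient) (x₀ : R)
    (hx₀ : (x₀ : N.ringCon.Quotient) = q) :
    {x : R // (x : N.ringCon.Quotient) = q} ≃ N where
  toFun x := ⟨x.1 - x₀, by
    rw [← pi_eq_iff]; rw [x.2, hx₀]⟩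
  invFun n := ⟨x₀ + n.1, by
    rw [← hx₀, pi_eq_iff]; simpa using n.2⟩
  left_inv x := by ext; simp
  right_inv n := by ext; simp

private lemma fiber_card (q : N.ringCon.Quotient) :
    Nat.card {x : R // (x : N.ringCon.Quotient) = q} = Nat.card N := by
  obtain ⟨x₀, hx₀⟩ := pi_surj N q
  exact Nat.card_congr (fiberEquiv N q x₀ hx₀)

private lemma cardR_eq : Nat.card R = Nat.card N.ringCon.Quotient * Nat.card N := by
  classical
  letI : Fintype N.ringCon.Quotient := Fintype.ofFinite _
  calc Nat.card R = ∑ q : N.ringCon.Quotient, Nat.card {x : R // (x : N.ringCon.Quotient) = q} :=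
        card_eq_sum_fibers _
    _ = ∑ _q : N.ringCon.Quotient, Nat.card N :=
        Finset.sum_congr rfl fun q _ => fiber_card N q
    _ = Nat.card N.ringCon.Quotient * Nat.card N := by
        simp [Nat.card_eq_fintype_card]

end Main
section Main2
open Finset
variable {R : Type*} [NonUnitalRing R] [Fintype R] (N : TwoSidedIdeal R)

private lemma sum_ite_card {β : Type*} [Fintype β] (P : β → Prop) [DecidablePred P] (c : ℕ) :
    (∑ b, if P b then c else 0) = Nat.card {b // P b} * c := by
  rw [← Finset.sum_filter, Finset.sum_const, smul_eq_mul, Nat.card_eq_fintype_card,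
    Fintype.card_subtype]

private lemma L1 (x : R) :
    Nat.card {y : R // x * y = y * x} ≤
      Nat.card {q : N.ringCon.Quotient //
          (x : N.ringCon.Quotient) * q = q * (x : N.ringCon.Quotient)} *
        Nat.card {n : N // x * (n : R) = (n : R) * x} := by
  classical
  letI : Fintype N.ringCon.Quotient := Fintype.ofFinite _
  rw [card_eq_sum_fibers (fun y : {y : R // x * y = y * x} => ((y : R) : N.ringCon.Quotient))]
  rw [← sum_ite_card (fun q : N.ringCon.Quotient =>
    (x : N.ringCon.Quotient) * q = q * (x : N.ringCon.Quotient))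
    (Nat.card {n : N // x * (n : R) = (n : R) * x})]
  refine Finset.sum_le_sum fun q _ => ?_
  rcases isEmpty_or_nonempty {a : {y : R // x * y = y * x} //
      ((a : R) : N.ringCon.Quotient) = q} with he | hne
  · simp [Nat.card_of_isEmpty]
  · obtain ⟨⟨⟨y₀, hy₀⟩, hq⟩⟩ := hne
    have hP : (x : N.ringCon.Quotient) * q = q * (x : N.ringCon.Quotient) := by
      rw [← hq]
      exact congrArg (fun z : R => (z : N.ringCon.Quotient)) hy₀
    rw [if_pos hP]
    refine Nat.card_le_card_of_injective (fun a =>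
      (⟨⟨(a : R) - y₀, ?_⟩, ?_⟩ : {n : N // x * (n : R) = (n : R) * x})) ?_
    · rw [← pi_eq_iff]
      rw [a.2, hq]
    · rw [mul_sub, sub_mul, a.1.2, hy₀]
    · intro a b h
      have h' : ((a : R) : R) - y₀ = ((b : R) : R) - y₀ :=
        congrArg (fun z : {n : N // x * (n : R) = (n : R) * x} => ((z : N) : R)) h
      ext
      exact sub_left_inj.mp h'

private def swapSubtype {α β : Type*} (P : α → β → Prop) :
    {p : α × β // P p.1 p.2} ≃ {p : β × α // P p.2 p.1} where
  toFun p := ⟨⟨p.1.2, p.1.1⟩, p.2⟩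
  invFun p := ⟨⟨p.1.2, p.1.1⟩, p.2⟩
  left_inv p := rfl
  right_inv p := rfl

private lemma L2 (q : N.ringCon.Quotient) [Fintype {x : R // (x : N.ringCon.Quotient) = q}]
    [Fintype N] :
    ∑ x : {x : R // (x : N.ringCon.Quotient) = q},
        Nat.card {n : N // (x : R) * (n : R) = (n : R) * (x : R)} ≤
      ∑ n : N, Nat.card {m : N // (n : R) * (m : R) = (m : R) * (n : R)} := by
  classical
  rw [← card_pairs (fun (x : {x : R // (x : N.ringCon.Quotient) = q}) (n : N) =>
    (x : R) * (n : R) = (n : R) * (x : R))]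
  rw [Nat.card_congr (swapSubtype (fun (x : {x : R // (x : N.ringCon.Quotient) = q}) (n : N) =>
    (x : R) * (n : R) = (n : R) * (x : R)))]
  rw [card_pairs (fun (n : N) (x : {x : R // (x : N.ringCon.Quotient) = q}) =>
    (x : R) * (n : R) = (n : R) * (x : R))]
  refine Finset.sum_le_sum fun n _ => ?_
  rcases isEmpty_or_nonempty {x : {x : R // (x : N.ringCon.Quotient) = q} //
      (x : R) * (n : R) = (n : R) * (x : R)} with he | hne
  · simp [Nat.card_of_isEmpty]
  · obtain ⟨⟨⟨x₀, hx₀⟩, hc₀⟩⟩ := hne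
    refine Nat.card_le_card_of_injective (fun a =>
      (⟨⟨((a : _) : R) - x₀, ?_⟩, ?_⟩ :
        {m : N // (n : R) * (m : R) = (m : R) * (n : R)})) ?_
    · rw [← pi_eq_iff]
      rw [a.1.2, hx₀]
    · have := a.2
      rw [mul_sub, sub_mul, hc₀, this]
    · intro a b h
      have h' : (((a : _) : R) : R) - x₀ = (((b : _) : R) : R) - x₀ :=
        congrArg (fun z : {m : N // (n : R) * (m : R) = (m : R) * (n : R)} => ((z : N) : R)) h
      ext
      exact sub_left_inj.mp h'

end Main2
section Main3
open Finset
variable {R : Type*} [NonUnitalRing R] [Fintype R] (N : TwoSidedIdeal R)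

private lemma countA_le :
    Nat.card {p : R × R // p.1 * p.2 = p.2 * p.1} ≤
      Nat.card {p : N.ringCon.Quotient × N.ringCon.Quotient // p.1 * p.2 = p.2 * p.1} *
        Nat.card {p : N × N // (p.1 : R) * (p.2 : R) = (p.2 : R) * (p.1 : R)} := by
  classical
  letI : Fintype N.ringCon.Quotient := Fintype.ofFinite _
  set C := Nat.card {p : N × N // (p.1 : R) * (p.2 : R) = (p.2 : R) * (p.1 : R)} with hC
  have hCsum : C = ∑ n : N, Nat.card {m : N // (n : R) * (m : R) = (m : R) * (n : R)} := by
    rw [hC]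
    exact card_pairs (fun (n m : N) => (n : R) * (m : R) = (m : R) * (n : R))
  calc Nat.card {p : R × R // p.1 * p.2 = p.2 * p.1}
      = ∑ x : R, Nat.card {y : R // x * y = y * x} :=
        card_pairs (fun x y : R => x * y = y * x)
    _ ≤ ∑ x : R, Nat.card {q : N.ringCon.Quotient //
          (x : N.ringCon.Quotient) * q = q * (x : N.ringCon.Quotient)} *
        Nat.card {n : N // x * (n : R) = (n : R) * x} :=
        Finset.sum_le_sum fun x _ => L1 N x
    _ = ∑ q : N.ringCon.Quotient, ∑ x : {x : R // (x : N.ringCon.Quotient) = q},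
          Nat.card {q' : N.ringCon.Quotient //
            ((x : R) : N.ringCon.Quotient) * q' = q' * ((x : R) : N.ringCon.Quotient)} *
          Nat.card {n : N // (x : R) * (n : R) = (n : R) * (x : R)} :=
        sum_fiberwise' _ _
    _ = ∑ q : N.ringCon.Quotient,
          Nat.card {q' : N.ringCon.Quotient // q * q' = q' * q} *
          ∑ x : {x : R // (x : N.ringCon.Quotient) = q},
            Nat.card {n : N // (x : R) * (n : R) = (n : R) * (x : R)} := by
        refine Finset.sum_congr rfl fun q _ => ?_
        rw [Finset.mul_sum]
        refine Finset.sum_congr rfl fun x _ => ?_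
        rw [x.2]
    _ ≤ ∑ q : N.ringCon.Quotient,
          Nat.card {q' : N.ringCon.Quotient // q * q' = q' * q} * C := by
        refine Finset.sum_le_sum fun q _ => Nat.mul_le_mul_left _ ?_
        rw [hCsum]
        exact L2 N q
    _ = (∑ q : N.ringCon.Quotient,
          Nat.card {q' : N.ringCon.Quotient // q * q' = q' * q}) * C := by
        rw [Finset.sum_mul]
    _ = Nat.card {p : N.ringCon.Quotient × N.ringCon.Quotient // p.1 * p.2 = p.2 * p.1} * C := by
        rw [card_pairs (fun q q' : N.ringCon.Quotient => q * q' = q' * q)]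

end Main3
section Main4
open Finset
variable {R : Type*} [NonUnitalRing R] [Fintype R] (N : TwoSidedIdeal R)

private lemma cRx_eq (hk : ∀ x y : R, x * y - y * x ∈ N → x * y = y * x) (x : R) :
    Nat.card {y : R // x * y = y * x} =
      Nat.card {q : N.ringCon.Quotient //
          (x : N.ringCon.Quotient) * q = q * (x : N.ringCon.Quotient)} * Nat.card N := by
  classical
  letI : Fintype N.ringCon.Quotient := Fintype.ofFinite _
  rw [card_eq_sum_fibers (fun y : {y : R // x * y = y * x} => ((y : R) : N.ringCon.Quotient))]
  rw [← sum_ite_card (fun q : N.ringCon.Quotient =>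
    (x : N.ringCon.Quotient) * q = q * (x : N.ringCon.Quotient)) (Nat.card N)]
  refine Finset.sum_congr rfl fun q _ => ?_
  by_cases hP : (x : N.ringCon.Quotient) * q = q * (x : N.ringCon.Quotient)
  · rw [if_pos hP, ← fiber_card N q]
    refine Nat.card_congr ?_
    refine ⟨fun a => ⟨a.1.1, a.2⟩, fun y => ⟨⟨y.1, ?_⟩, y.2⟩, fun a => rfl, fun y => rfl⟩
    refine hk x y.1 ((pi_eq_iff N _ _).mp ?_)
    show (x : N.ringCon.Quotient) * (y.1 : N.ringCon.Quotient) =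
      (y.1 : N.ringCon.Quotient) * (x : N.ringCon.Quotient)
    rw [y.2]
    exact hP
  · rw [if_neg hP]
    have : IsEmpty {a : {y : R // x * y = y * x} //
        ((a : R) : N.ringCon.Quotient) = q} := by
      refine ⟨fun a => hP ?_⟩
      rw [← a.2]
      exact congrArg (fun z : R => (z : N.ringCon.Quotient)) a.1.2
    rw [Nat.card_of_isEmpty]

private lemma countA_eq (hk : ∀ x y : R, x * y - y * x ∈ N → x * y = y * x) :
    Nat.card {p : R × R // p.1 * p.2 = p.2 * p.1} =
      Nat.card {p : N.ringCon.Quotient × N.ringCon.Quotient // p.1 * p.2 = p.2 * p.1} *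
        Nat.card {p : N × N // (p.1 : R) * (p.2 : R) = (p.2 : R) * (p.1 : R)} := by
  classical
  letI : Fintype N.ringCon.Quotient := Fintype.ofFinite _
  have hc : ∀ (n : N) (x : R), x * (n : R) = (n : R) * x := fun n x =>
    hk x n (sub_mem (N.mul_mem_left _ _ n.2) (N.mul_mem_right _ _ n.2))
  have hC : Nat.card {p : N × N // (p.1 : R) * (p.2 : R) = (p.2 : R) * (p.1 : R)} =
      Nat.card N * Nat.card N := by
    rw [Nat.card_congr (Equiv.subtypeUnivEquiv fun p : N × N => hc p.2 p.1), Nat.card_prod]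
  rw [hC]
  calc Nat.card {p : R × R // p.1 * p.2 = p.2 * p.1}
      = ∑ x : R, Nat.card {y : R // x * y = y * x} :=
        card_pairs (fun x y : R => x * y = y * x)
    _ = ∑ x : R, Nat.card {q : N.ringCon.Quotient //
          (x : N.ringCon.Quotient) * q = q * (x : N.ringCon.Quotient)} * Nat.card N :=
        Finset.sum_congr rfl fun x _ => cRx_eq N hk x
    _ = (∑ x : R, Nat.card {q : N.ringCon.Quotient //
          (x : N.ringCon.Quotient) * q = q * (x : N.ringCon.Quotient)}) * Nat.card N := by
        rw [Finset.sum_mul]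
    _ = (∑ q : N.ringCon.Quotient, ∑ x : {x : R // (x : N.ringCon.Quotient) = q},
          Nat.card {q' : N.ringCon.Quotient //
            ((x : R) : N.ringCon.Quotient) * q' = q' * ((x : R) : N.ringCon.Quotient)}) *
          Nat.card N := by
        rw [sum_fiberwise' (fun x : R => (x : N.ringCon.Quotient))
          (fun x : R => Nat.card {q : N.ringCon.Quotient //
            (x : N.ringCon.Quotient) * q = q * (x : N.ringCon.Quotient)})]
    _ = (∑ q : N.ringCon.Quotient, Nat.card N *
          Nat.card {q' : N.ringCon.Quotient // q * q' = q' * q}) * Nat.card N := by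
        congr 1
        refine Finset.sum_congr rfl fun q _ => ?_
        have : ∀ x : {x : R // (x : N.ringCon.Quotient) = q},
            Nat.card {q' : N.ringCon.Quotient //
              ((x : R) : N.ringCon.Quotient) * q' = q' * ((x : R) : N.ringCon.Quotient)} =
            Nat.card {q' : N.ringCon.Quotient // q * q' = q' * q} := fun x => by rw [x.2]
        rw [Finset.sum_congr rfl fun x _ => this x, Finset.sum_const, smul_eq_mul, Finset.card_univ,
          ← Nat.card_eq_fintype_card, fiber_card N q]
    _ = Nat.card {p : N.ringCon.Quotient × N.ringCon.Quotient // p.1 * p.2 = p.2 * p.1} *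
          (Nat.card N * Nat.card N) := by
        rw [← Finset.mul_sum, card_pairs (fun q q' : N.ringCon.Quotient => q * q' = q' * q)]
        ring

end Main4
private lemma relCommProb_univ (S : Type*) [NonUnitalRing S] :
    relCommProb S Set.univ Set.univ =
      (Nat.card {p : S × S // p.1 * p.2 = p.2 * p.1} : ℚ) /
        ((Nat.card S : ℚ) * (Nat.card S : ℚ)) := by
  unfold relCommProb
  rw [Nat.card_univ]
  congr 1
  have e : {p : ↥(Set.univ : Set S) × ↥(Set.univ : Set S) //
      (p.1 : S) * (p.2 : S) = (p.2 : S) * (p.1 : S)} ≃ {p : S × S // p.1 * p.2 = p.2 * p.1} :=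
    ((Equiv.Set.univ S).prodCongr (Equiv.Set.univ S)).subtypeEquiv (fun p => Iff.rfl)
  exact congrArg Nat.cast (Nat.card_congr e)

/-- For a two-sided ideal `N` of a finite non-commutative ring `R`:
`Pr(R) ≤ Pr(R/N) · Pr(N)`, with equality when `N ∩ [R, R] = {0}`. -/
theorem commProb_le_quotient_mul {R : Type*} [NonUnitalRing R] [Fintype R]
    (hnc : ∃ a b : R, a * b ≠ b * a) (N : TwoSidedIdeal R) :
    relCommProb R Set.univ Set.univ ≤
      relCommProb N.ringCon.Quotient Set.univ Set.univ *
        relCommProb R (N : Set R) (N : Set R) ∧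
    ((N : Set R) ∩ ((commSub (⊤ : NonUnitalSubring R) : AddSubgroup R) : Set R) = {0} →
      relCommProb R Set.univ Set.univ =
        relCommProb N.ringCon.Quotient Set.univ Set.univ *
          relCommProb R (N : Set R) (N : Set R)) := by
  classical
  have hA := relCommProb_univ R
  have hB := relCommProb_univ N.ringCon.Quotient
  have hNN : relCommProb R (N : Set R) (N : Set R) =
      (Nat.card {p : N × N // (p.1 : R) * (p.2 : R) = (p.2 : R) * (p.1 : R)} : ℚ) /
        ((Nat.card N : ℚ) * (Nat.card N : ℚ)) := rfl
  have hr : Nat.card R = Nat.card N.ringCon.Quotient * Nat.card N := cardR_eq N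
  have hne1 : Nonempty R := ⟨0⟩
  have hne2 : Nonempty N := ⟨⟨0, N.zero_mem⟩⟩
  have hne3 : Nonempty N.ringCon.Quotient := ⟨((0 : R) : N.ringCon.Quotient)⟩
  have hRpos : 0 < Nat.card R := Nat.card_pos
  have hDpos : (0 : ℚ) < (Nat.card R : ℚ) * (Nat.card R : ℚ) := by
    have : (0 : ℚ) < (Nat.card R : ℚ) := by exact_mod_cast hRpos
    exact mul_pos this this
  have hden : ((Nat.card N.ringCon.Quotient : ℚ) * (Nat.card N.ringCon.Quotient : ℚ)) *
      ((Nat.card N : ℚ) * (Nat.card N : ℚ)) = (Nat.card R : ℚ) * (Nat.card R : ℚ) := by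
    rw [hr]
    push_cast
    ring
  constructor
  · rw [hA, hB, hNN, div_mul_div_comm, hden]
    rw [div_le_div_iff_of_pos_right hDpos]
    exact_mod_cast countA_le N
  · intro h
    have hk : ∀ x y : R, x * y - y * x ∈ N → x * y = y * x := by
      intro x y hxy
      have h2 : x * y - y * x ∈ commSub (⊤ : NonUnitalSubring R) :=
        AddSubgroup.subset_closure ⟨x, trivial, y, rfl⟩
      have h3 : x * y - y * x ∈ (N : Set R) ∩
          ((commSub (⊤ : NonUnitalSubring R) : AddSubgroup R) : Set R) := ⟨hxy, h2⟩
      rw [h] at h3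
      exact sub_eq_zero.mp h3
    rw [hA, hB, hNN, div_mul_div_comm, hden]
    have : (Nat.card {p : R × R // p.1 * p.2 = p.2 * p.1} : ℚ) =
        (Nat.card {p : N.ringCon.Quotient × N.ringCon.Quotient // p.1 * p.2 = p.2 * p.1} : ℚ) *
          (Nat.card {p : N × N // (p.1 : R) * (p.2 : R) = (p.2 : R) * (p.1 : R)} : ℚ) := by
      exact_mod_cast countA_eq N hk
    rw [this]
end

section
/- Let R be a finite (not necessarily unital, not necessarily commutative) ring and S a subring of R. Then Pr(S, R) ≥ (1/|[S, R]|) · (1 + (|[S, R]| − 1)/|S : Z(S, R)|). In particular, if Z(S, R) ≠ S then Pr(S, R) > 1/|[S, R]|. -/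
open scoped Pointwise

section Aux

variable {R : Type*} [NonUnitalRing R]

/-- The additive commutator map `r ↦ s*r - r*s`. -/
def commMap (s : R) : R →+ R :=
  AddMonoidHom.mk' (fun r => s * r - r * s) (fun a b => by
    simp only [mul_add, add_mul]; abel)

lemma commMap_range (s : R) : (commMap s).range = elemComm s := by
  ext z
  constructor
  · rintro ⟨y, rfl⟩; exact ⟨y, rfl⟩
  · rintro ⟨y, rfl⟩; exact ⟨y, rfl⟩

lemma card_centralizer_mul [Fintype R] (s : R) :
    Nat.card {r : R // s * r = r * s} * Nat.card (elemComm s) = Nat.card R := by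
  have h1 : Nat.card R = Nat.card (R ⧸ (commMap s).ker) * Nat.card ((commMap s).ker) :=
    AddSubgroup.card_eq_card_quotient_mul_card_addSubgroup _
  have h2 : Nat.card (R ⧸ (commMap s).ker) = Nat.card (elemComm s) := by
    rw [← commMap_range s]
    exact Nat.card_congr (QuotientAddGroup.quotientKerEquivRange (commMap s)).toEquiv
  have h3 : Nat.card ((commMap s).ker) = Nat.card {r : R // s * r = r * s} := by
    refine Nat.card_congr (Equiv.subtypeEquivRight fun r => ?_)
    show s * r - r * s = 0 ↔ _
    rw [sub_eq_zero]
  rw [h1, h2, h3, Nat.mul_comm]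

lemma elemComm_le_commSub {S : NonUnitalSubring R} {s : R} (hs : s ∈ S) :
    elemComm s ≤ commSub S := by
  rintro z ⟨y, rfl⟩
  exact AddSubgroup.subset_closure ⟨s, hs, y, rfl⟩

lemma zCenter_le (S : NonUnitalSubring R) : zCenter S ≤ S.toAddSubgroup :=
  fun _ hx => hx.1

end Aux

/-- `Pr(S, R) ≥ (1/|[S, R]|)(1 + (|[S, R]| − 1)/|S : Z(S, R)|)`; in particular, if
`Z(S, R) ≠ S` then `Pr(S, R) > 1/|[S, R]|`. -/
theorem relCommProb_ge_commSub {R : Type*} [NonUnitalRing R] [Fintype R]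
    (S : NonUnitalSubring R) :
    relCommProb R (S : Set R) Set.univ ≥
      (1 / (Nat.card (commSub S) : ℚ)) *
        (1 + ((Nat.card (commSub S) : ℚ) - 1) /
          (((zCenter S).addSubgroupOf S.toAddSubgroup).index : ℚ)) ∧
    (((zCenter S : AddSubgroup R) : Set R) ≠ (S : Set R) →
      relCommProb R (S : Set R) Set.univ > 1 / (Nat.card (commSub S) : ℚ)) := by
  classical
  -- notation
  set K : ℕ := Nat.card (commSub S) with hKdef
  set n : ℕ := ((zCenter S).addSubgroupOf S.toAddSubgroup).index with hndef
  have hnR : (0 : ℕ) < Fintype.card R := Fintype.card_pos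
  -- card of S
  have hS0 : (0 : R) ∈ (S : Set R) := S.zero_mem
  have hnS : 0 < Nat.card (S : Set R) := Nat.card_pos_iff.mpr ⟨⟨⟨0, hS0⟩⟩, Set.toFinite _⟩
  have hK1 : 1 ≤ K := Nat.one_le_iff_ne_zero.mpr (Nat.card_pos_iff.mpr
    ⟨⟨0⟩, Subtype.finite⟩).ne'
  have hn0 : n ≠ 0 := by
    have : Finite (S.toAddSubgroup ⧸ (zCenter S).addSubgroupOf S.toAddSubgroup) := by
      have : Finite S.toAddSubgroup := Subtype.finite
      exact Quotient.finite _
    exact AddSubgroup.index_ne_zero_of_finite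
  -- counting the commuting pairs as a sum over S
  have hcount : (Nat.card {p : ↥(S : Set R) × ↥(Set.univ : Set R) //
        (p.1 : R) * (p.2 : R) = (p.2 : R) * (p.1 : R)}) =
      ∑ s : (S : Set R), Nat.card {r : R // (s : R) * r = r * (s : R)} := by
    rw [Nat.card_eq_fintype_card]
    rw [Fintype.card_congr (Equiv.subtypeProdEquivSigmaSubtype
      (fun (a : (S : Set R)) (b : (Set.univ : Set R)) => (a : R) * b = (b : R) * a))]
    rw [Fintype.card_sigma]
    refine Finset.sum_congr rfl fun s _ => ?_
    rw [Nat.card_eq_fintype_card]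
    exact Fintype.card_congr ((Equiv.Set.univ R).subtypeEquiv fun t => Iff.rfl)
  -- pointwise lower bound on each summand
  have hbound : ∀ s : (S : Set R),
      ((if (s : R) ∈ zCenter S then (Fintype.card R : ℚ) else (Fintype.card R : ℚ) / K)) ≤
        (Nat.card {r : R // (s : R) * r = r * (s : R)} : ℚ) := by
    intro s
    by_cases hz : (s : R) ∈ zCenter S
    · rw [if_pos hz]
      have : Nat.card {r : R // (s : R) * r = r * (s : R)} = Fintype.card R := by
        rw [Nat.card_eq_fintype_card]
        refine Fintype.card_congr (Equiv.subtypeUnivEquiv fun r => hz.2 r)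
      rw [this]
    · rw [if_neg hz]
      have hmul := card_centralizer_mul (R := R) (s : R)
      have hle : Nat.card (elemComm (s : R)) ≤ K := by
        have : Finite (commSub S) := Subtype.finite
        exact AddSubgroup.card_le_of_le (elemComm_le_commSub s.2)
      have hpos : 0 < Nat.card (elemComm (s : R)) :=
        Nat.card_pos_iff.mpr ⟨⟨0⟩, Subtype.finite⟩
      rw [Nat.card_eq_fintype_card (α := R)] at hmul
      have hKpos : (0 : ℚ) < K := by exact_mod_cast hK1
      rw [div_le_iff₀ hKpos]
      calc (Fintype.card R : ℚ)
          = (Nat.card {r : R // (s : R) * r = r * (s : R)} : ℚ) *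
            (Nat.card (elemComm (s : R)) : ℚ) := by exact_mod_cast hmul.symm
        _ ≤ _ * (K : ℚ) := by
            refine mul_le_mul_of_nonneg_left ?_ (by positivity)
            exact_mod_cast hle
  -- the number of central elements
  have hZcard : Fintype.card {s : (S : Set R) // (s : R) ∈ zCenter S} =
      Nat.card (zCenter S) := by
    rw [Nat.card_eq_fintype_card]
    refine Fintype.card_congr ⟨fun x => ⟨(x.1 : R), x.2⟩,
      fun z => ⟨⟨(z : R), z.2.1⟩, z.2⟩, fun x => by ext; rfl, fun z => by ext; rfl⟩
  -- index relation : n * |Z| = |S|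
  have hindex : n * Nat.card (zCenter S) = Nat.card (S : Set R) := by
    have h1 : Nat.card ((zCenter S).addSubgroupOf S.toAddSubgroup) =
        Nat.card (zCenter S) :=
      Nat.card_congr (AddSubgroup.addSubgroupOfEquivOfLe (zCenter_le S)).toEquiv
    have h2 : Nat.card S.toAddSubgroup = Nat.card (S : Set R) := rfl
    rw [hndef, ← h1, ← h2]
    exact AddSubgroup.index_mul_card _
  -- summing the bound
  have hsum : (Nat.card (zCenter S) : ℚ) * (Fintype.card R : ℚ) +
      ((Nat.card (S : Set R) : ℚ) - (Nat.card (zCenter S) : ℚ)) *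
        ((Fintype.card R : ℚ) / K) ≤
      ∑ s : (S : Set R), (Nat.card {r : R // (s : R) * r = r * (s : R)} : ℚ) := by
    have h1 : ∑ s : (S : Set R),
        ((if (s : R) ∈ zCenter S then (Fintype.card R : ℚ) else (Fintype.card R : ℚ) / K)) ≤
        ∑ s : (S : Set R), (Nat.card {r : R // (s : R) * r = r * (s : R)} : ℚ) :=
      Finset.sum_le_sum fun s _ => hbound s
    refine le_trans (le_of_eq ?_) h1
    rw [Finset.sum_ite, Finset.sum_const, Finset.sum_const, nsmul_eq_mul, nsmul_eq_mul]
    have hc1 : (Finset.univ.filter fun s : (S : Set R) => (s : R) ∈ zCenter S).card =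
        Nat.card (zCenter S) := by
      rw [← hZcard, Fintype.card_subtype]
    have hc2 : ((Finset.univ.filter fun s : (S : Set R) => ¬ (s : R) ∈ zCenter S).card : ℚ) =
        (Nat.card (S : Set R) : ℚ) - (Nat.card (zCenter S) : ℚ) := by
      have h := Finset.card_filter_add_card_filter_not
        (s := (Finset.univ : Finset (S : Set R)))
        (p := fun s : (S : Set R) => (s : R) ∈ zCenter S)
      rw [Finset.card_univ, ← Nat.card_eq_fintype_card, hc1] at h
      have h2 := congrArg (fun m : ℕ => (m : ℚ)) h
      push_cast at h2 ⊢
      linarith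
    rw [hc1, hc2]
  -- main inequality
  have hKQ : (0 : ℚ) < K := by exact_mod_cast hK1
  have hnQ : (0 : ℚ) < n := by exact_mod_cast Nat.pos_of_ne_zero hn0
  have hSQ : (0 : ℚ) < Nat.card (S : Set R) := by exact_mod_cast hnS
  have hRQ : (0 : ℚ) < Fintype.card R := by exact_mod_cast hnR
  have hZQ : (n : ℚ) * (Nat.card (zCenter S) : ℚ) = (Nat.card (S : Set R) : ℚ) := by
    exact_mod_cast hindex
  have hmain : relCommProb R (S : Set R) Set.univ ≥
      (1 / (K : ℚ)) * (1 + ((K : ℚ) - 1) / (n : ℚ)) := by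
    rw [relCommProb, hcount]
    have hcardT : Nat.card (Set.univ : Set R) = Fintype.card R := by
      rw [Nat.card_eq_fintype_card]
      exact Fintype.card_congr (Equiv.Set.univ R)
    rw [hcardT]
    push_cast
    rw [ge_iff_le, le_div_iff₀ (by positivity)]
    show 1 / (K : ℚ) * (1 + ((K : ℚ) - 1) / n) *
        ((Nat.card (S : Set R) : ℚ) * (Fintype.card R : ℚ)) ≤
      ∑ s : (S : Set R), (Nat.card {r : R // (s : R) * r = r * (s : R)} : ℚ)
    rw [← hZQ]
    rw [← hZQ] at hsum
    refine le_trans (le_of_eq ?_) hsum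
    field_simp
    ring
  refine ⟨hmain, fun hne => ?_⟩
  -- strict part : K ≥ 2
  have hK2 : 2 ≤ K := by
    have : ∃ x, x ∈ (S : Set R) ∧ x ∉ ((zCenter S : AddSubgroup R) : Set R) := by
      by_contra h
      push_neg at h
      exact hne (Set.Subset.antisymm (fun x hx => hx.1) h)
    obtain ⟨s, hsS, hsz⟩ := this
    have : ∃ r : R, s * r ≠ r * s := by
      by_contra h
      push_neg at h
      exact hsz ⟨hsS, h⟩
    obtain ⟨r, hr⟩ := this
    have hmem : s * r - r * s ∈ commSub S := AddSubgroup.subset_closure ⟨s, hsS, r, rfl⟩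
    have hne0 : s * r - r * s ≠ 0 := sub_ne_zero.mpr hr
    have : Nontrivial (commSub S) := ⟨⟨⟨s * r - r * s, hmem⟩, 0, by
      simp only [ne_eq, Subtype.mk.injEq]
      exact fun h => hne0 (by simpa using h)⟩⟩
    have : Finite (commSub S) := Subtype.finite
    exact Finite.one_lt_card
  have hK2Q : (2 : ℚ) ≤ K := by exact_mod_cast hK2
  refine lt_of_lt_of_le ?_ hmain
  have : (0 : ℚ) < ((K : ℚ) - 1) / n := by
    apply div_pos (by linarith) hnQ
  calc 1 / (K : ℚ) = 1 / (K : ℚ) * 1 := by ring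
    _ < 1 / (K : ℚ) * (1 + ((K : ℚ) - 1) / n) := by
        apply mul_lt_mul_of_pos_left (by linarith) (by positivity)
end
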